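/- arXiv:1506.03898 — 7 statements merged into one kernel-verified Lean document; each statement's English description precedes it below -/
import Mathlib

section
/- For real numbers $a > 1$ and $b \in \mathbb{R}$, $\int_0^\infty \frac{e^x - 1}{x} e^{-ax} \cos(bx)\,dx = \frac{1}{2}\log\left(\frac{a^2 + b^2}{(a-1)^2 + b^2}\right)$. -/
open MeasureTheory Real Set Filter

lemma laplace_cos (s b : ℝ) (hs : 0 < s) :
    ∫ x in Set.Ioi (0:ℝ), Real.exp (-s * x) * Real.cos (b * x)
      = s / (s ^ 2 + b ^ 2) := by
  have hD : 0 < s ^ 2 + b ^ 2 := by positivity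
  set F : ℝ → ℝ := fun x =>
    Real.exp (-s * x) * (b * Real.sin (b * x) - s * Real.cos (b * x)) / (s ^ 2 + b ^ 2) with hF
  have hderiv : ∀ x ∈ Set.Ici (0:ℝ),
      HasDerivAt F (Real.exp (-s * x) * Real.cos (b * x)) x := by
    intro x _
    have h1 : HasDerivAt (fun x : ℝ => Real.exp (-s * x)) (Real.exp (-s * x) * (-s)) x := by
      have := ((hasDerivAt_id x).const_mul (-s)).exp
      simpa using this
    have hsin : HasDerivAt (fun x : ℝ => Real.sin (b * x)) (Real.cos (b * x) * b) x := by
      have := (Real.hasDerivAt_sin (b * x)).comp x ((hasDerivAt_id x).const_mul b)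
      simpa [Function.comp_def] using this
    have hcos : HasDerivAt (fun x : ℝ => Real.cos (b * x)) (-Real.sin (b * x) * b) x := by
      have := (Real.hasDerivAt_cos (b * x)).comp x ((hasDerivAt_id x).const_mul b)
      simpa [Function.comp_def] using this
    have h2 := (h1.mul ((hsin.const_mul b).sub (hcos.const_mul s))).div_const (s ^ 2 + b ^ 2)
    refine h2.congr_deriv ?_
    rw [div_eq_iff hD.ne']
    simp only [Pi.sub_apply]
    ring
  have hint : MeasureTheory.IntegrableOn
      (fun x => Real.exp (-s * x) * Real.cos (b * x)) (Set.Ioi 0) := by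
    refine (exp_neg_integrableOn_Ioi 0 hs).mono' ?_ ?_
    · exact (((Real.continuous_exp.comp (continuous_const.mul continuous_id)).mul
        (Real.continuous_cos.comp (continuous_const.mul continuous_id)))).aestronglyMeasurable
    · filter_upwards with x
      rw [norm_mul, Real.norm_eq_abs, Real.norm_eq_abs, Real.abs_exp]
      calc Real.exp (-s * x) * |Real.cos (b * x)| ≤ Real.exp (-s * x) * 1 := by
            exact mul_le_mul_of_nonneg_left (Real.abs_cos_le_one _) (Real.exp_pos _).le
        _ = Real.exp (-s * x) := mul_one _
  have htend : Tendsto F atTop (nhds 0) := by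
    rw [show (0:ℝ) = 0 from rfl]
    apply tendsto_zero_iff_norm_tendsto_zero.mpr
    apply squeeze_zero (g := fun x => (|b| + |s|) / (s ^ 2 + b ^ 2) * Real.exp (-s * x))
      (fun x => norm_nonneg _)
    · intro x
      rw [hF]
      simp only [norm_div, Real.norm_eq_abs, abs_mul, Real.abs_exp, abs_of_pos hD]
      rw [div_le_iff₀ hD]
      have hb : |b * Real.sin (b * x) - s * Real.cos (b * x)| ≤ |b| + |s| := by
        calc |b * Real.sin (b * x) - s * Real.cos (b * x)|
            ≤ |b * Real.sin (b * x)| + |s * Real.cos (b * x)| := abs_sub _ _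
          _ ≤ |b| * 1 + |s| * 1 := by
              rw [abs_mul, abs_mul]
              gcongr
              exacts [Real.abs_sin_le_one _, Real.abs_cos_le_one _]
          _ = |b| + |s| := by ring
      calc Real.exp (-s * x) * |b * Real.sin (b * x) - s * Real.cos (b * x)|
          ≤ Real.exp (-s * x) * (|b| + |s|) :=
            mul_le_mul_of_nonneg_left hb (Real.exp_pos _).le
        _ = (|b| + |s|) / (s ^ 2 + b ^ 2) * Real.exp (-s * x) * (s ^ 2 + b ^ 2) := by
            field_simp
    · have h0 : Tendsto (fun x : ℝ => Real.exp (-s * x)) atTop (nhds 0) := by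
        apply Real.tendsto_exp_atBot.comp
        exact Filter.Tendsto.const_mul_atTop_of_neg (neg_neg_iff_pos.mpr hs) (tendsto_id (α := ℝ))
      have := h0.const_mul ((|b| + |s|) / (s ^ 2 + b ^ 2))
      simpa using this
  have := integral_Ioi_of_hasDerivAt_of_tendsto' hderiv hint htend
  rw [this, hF]
  simp
  field_simp

theorem stmt_1 (a b : ℝ) (ha : 1 < a) :
    (∫ x in Set.Ioi (0:ℝ),
        (Real.exp x - 1) / x * Real.exp (-a * x) * Real.cos (b * x))
      = (1 / 2) * Real.log ((a ^ 2 + b ^ 2) / ((a - 1) ^ 2 + b ^ 2)) := by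
  have ha0 : 0 < a - 1 := by linarith
  have hle : a - 1 ≤ a := by linarith
  -- Step 1: rewrite integrand as inner integral over s
  have step1 : (∫ x in Set.Ioi (0:ℝ),
      (Real.exp x - 1) / x * Real.exp (-a * x) * Real.cos (b * x))
      = ∫ x in Set.Ioi (0:ℝ), ∫ s in Set.Ioc (a-1) a,
          Real.exp (-s * x) * Real.cos (b * x) := by
    refine MeasureTheory.setIntegral_congr_fun measurableSet_Ioi (fun x hx => ?_)
    have hx0 : 0 < x := hx
    have hG : ∀ s ∈ Set.uIcc (a-1) a,
        HasDerivAt (fun s => -Real.exp (-s * x) / x) (Real.exp (-s * x)) s := by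
      intro s _
      have h1 : HasDerivAt (fun s : ℝ => Real.exp (-s * x)) (Real.exp (-s * x) * (-x)) s := by
        have := (((hasDerivAt_id s).const_mul (-1:ℝ)).mul_const x).exp
        simpa [neg_mul] using this
      have := (h1.neg).div_const x
      refine this.congr_deriv ?_
      rw [div_eq_iff hx0.ne']
      ring
    have hInt : IntervalIntegrable (fun s => Real.exp (-s * x)) MeasureTheory.volume (a-1) a :=
      (Real.continuous_exp.comp ((continuous_id.neg).mul continuous_const)).intervalIntegrable _ _
    have hcalc : (∫ s in Set.Ioc (a-1) a, Real.exp (-s * x))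
        = -Real.exp (-a * x) / x - -Real.exp (-(a-1) * x) / x := by
      rw [← intervalIntegral.integral_of_le hle]
      exact intervalIntegral.integral_eq_sub_of_hasDerivAt hG hInt
    rw [MeasureTheory.integral_mul_const, hcalc]
    rw [show -(a-1) * x = x + -a * x by ring, Real.exp_add]
    field_simp
    ring
  -- Step 2: Fubini
  have hIntProd : MeasureTheory.Integrable
      (Function.uncurry fun (x s : ℝ) => Real.exp (-s * x) * Real.cos (b * x))
      ((MeasureTheory.volume.restrict (Set.Ioi (0:ℝ))).prod
        (MeasureTheory.volume.restrict (Set.Ioc (a-1) a))) := by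
    have hbound : MeasureTheory.Integrable
        (fun p : ℝ × ℝ => Real.exp (-(a-1) * p.1) * (1:ℝ))
        ((MeasureTheory.volume.restrict (Set.Ioi (0:ℝ))).prod
          (MeasureTheory.volume.restrict (Set.Ioc (a-1) a))) := by
      exact MeasureTheory.Integrable.mul_prod (exp_neg_integrableOn_Ioi 0 ha0)
        (MeasureTheory.integrableOn_const measure_Ioc_lt_top.ne)
    refine hbound.mono' ?_ ?_
    · have : Continuous (fun p : ℝ × ℝ => Real.exp (-p.2 * p.1) * Real.cos (b * p.1)) := by
        fun_prop
      exact this.aestronglyMeasurable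
    · rw [MeasureTheory.Measure.prod_restrict]
      filter_upwards [MeasureTheory.ae_restrict_mem (measurableSet_Ioi.prod measurableSet_Ioc)]
        with p hp
      obtain ⟨hp1, hp2⟩ := hp
      simp only [Function.uncurry, mul_one, norm_mul, Real.norm_eq_abs, Real.abs_exp]
      calc Real.exp (-p.2 * p.1) * |Real.cos (b * p.1)|
          ≤ Real.exp (-p.2 * p.1) * 1 :=
            mul_le_mul_of_nonneg_left (Real.abs_cos_le_one _) (Real.exp_pos _).le
        _ ≤ Real.exp (-(a-1) * p.1) := by
            rw [mul_one]
            apply Real.exp_le_exp.mpr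
            have h1 : (0:ℝ) ≤ p.1 := le_of_lt hp1
            have h2 : a - 1 ≤ p.2 := le_of_lt hp2.1
            nlinarith
  have step2 : (∫ x in Set.Ioi (0:ℝ), ∫ s in Set.Ioc (a-1) a,
        Real.exp (-s * x) * Real.cos (b * x))
      = ∫ s in Set.Ioc (a-1) a, ∫ x in Set.Ioi (0:ℝ),
          Real.exp (-s * x) * Real.cos (b * x) :=
    MeasureTheory.integral_integral_swap hIntProd
  -- Step 3: evaluate inner integral
  have step3 : (∫ s in Set.Ioc (a-1) a, ∫ x in Set.Ioi (0:ℝ),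
        Real.exp (-s * x) * Real.cos (b * x))
      = ∫ s in Set.Ioc (a-1) a, s / (s ^ 2 + b ^ 2) := by
    refine MeasureTheory.setIntegral_congr_fun measurableSet_Ioc (fun s hs => ?_)
    exact laplace_cos s b (lt_trans ha0 hs.1)
  -- Step 4: evaluate outer integral
  have step4 : (∫ s in Set.Ioc (a-1) a, s / (s ^ 2 + b ^ 2))
      = 1/2 * Real.log (a ^ 2 + b ^ 2) - 1/2 * Real.log ((a-1) ^ 2 + b ^ 2) := by
    rw [← intervalIntegral.integral_of_le hle]
    have hne : ∀ s ∈ Set.uIcc (a-1) a, s ^ 2 + b ^ 2 ≠ 0 := by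
      intro s hs
      rw [Set.uIcc_of_le hle] at hs
      have : 0 < s := lt_of_lt_of_le ha0 hs.1
      positivity
    have hderiv : ∀ s ∈ Set.uIcc (a-1) a,
        HasDerivAt (fun s => 1/2 * Real.log (s ^ 2 + b ^ 2)) (s / (s ^ 2 + b ^ 2)) s := by
      intro s hs
      have h1 : HasDerivAt (fun s : ℝ => s ^ 2 + b ^ 2) (2 * s) s := by
        simpa using (hasDerivAt_pow 2 s).add_const (b ^ 2)
      have h2 := (h1.log (hne s hs)).const_mul (1/2 : ℝ)
      refine h2.congr_deriv ?_
      ring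
    have hInt : IntervalIntegrable (fun s => s / (s ^ 2 + b ^ 2))
        MeasureTheory.volume (a-1) a := by
      apply ContinuousOn.intervalIntegrable
      exact ContinuousOn.div continuousOn_id (by fun_prop) hne
    rw [intervalIntegral.integral_eq_sub_of_hasDerivAt hderiv hInt]
  rw [step1, step2, step3, step4]
  have hA : (0:ℝ) < a ^ 2 + b ^ 2 := by positivity
  have hB : (0:ℝ) < (a-1) ^ 2 + b ^ 2 := by positivity
  rw [Real.log_div hA.ne' hB.ne']
  ring
end

section
/- For real numbers $a > 1$ and $b \neq 0$, $\int_0^\infty \frac{e^x - 1}{x} e^{-ax} \sin(bx)\,dx = \arctan\frac{a}{b} - \arctan\frac{a-1}{b}$. -/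
open Real MeasureTheory Set Filter intervalIntegral
open scoped Topology

lemma abs_sin_le_one' (x : ℝ) : |Real.sin x| ≤ 1 :=
  abs_le.mpr ⟨Real.neg_one_le_sin x, Real.sin_le_one x⟩

/-- Laplace transform of sin: ∫₀^∞ e^{-tx} sin(bx) dx = b/(t²+b²) for t > 0. -/
lemma laplace_sin (t b : ℝ) (ht : 0 < t) :
    (∫ x in Ioi (0:ℝ), Real.exp (-t * x) * Real.sin (b * x)) = b / (t ^ 2 + b ^ 2) := by
  have hd : t ^ 2 + b ^ 2 ≠ 0 := by positivity
  set F : ℝ → ℝ := fun x =>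
    -(Real.exp (-t * x) * (t * Real.sin (b * x) + b * Real.cos (b * x))) / (t ^ 2 + b ^ 2)
    with hF
  have hderiv : ∀ x ∈ Ici (0:ℝ), HasDerivAt F (Real.exp (-t * x) * Real.sin (b * x)) x := by
    intro x _
    have he : HasDerivAt (fun x : ℝ => Real.exp (-t * x)) (Real.exp (-t * x) * (-t)) x := by
      have := ((hasDerivAt_id x).const_mul (-t)).exp
      simpa [mul_comm] using this
    have hs : HasDerivAt (fun x : ℝ => Real.sin (b * x)) (Real.cos (b * x) * b) x := by
      have := (Real.hasDerivAt_sin (b * x)).comp x ((hasDerivAt_id x).const_mul b)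
      simpa [mul_comm, Function.comp_def] using this
    have hc : HasDerivAt (fun x : ℝ => Real.cos (b * x)) (-Real.sin (b * x) * b) x := by
      have := (Real.hasDerivAt_cos (b * x)).comp x ((hasDerivAt_id x).const_mul b)
      simpa [mul_comm, Function.comp_def] using this
    have h2 := ((he.mul ((hs.const_mul t).add (hc.const_mul b))).neg).div_const (t ^ 2 + b ^ 2)
    refine h2.congr_deriv ?_
    simp only [Pi.add_apply]
    rw [div_eq_iff hd]
    ring
  have hint : IntegrableOn (fun x => Real.exp (-t * x) * Real.sin (b * x)) (Ioi (0:ℝ)) := by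
    refine ((exp_neg_integrableOn_Ioi 0 ht).mono' ?_ ?_)
    · exact (((Real.continuous_exp.comp (continuous_const.mul continuous_id)).mul
        (Real.continuous_sin.comp (continuous_const.mul continuous_id)))).aestronglyMeasurable
    · filter_upwards with x
      rw [norm_mul, Real.norm_eq_abs, Real.norm_eq_abs, Real.abs_exp]
      calc Real.exp (-t * x) * |Real.sin (b * x)| ≤ Real.exp (-t * x) * 1 :=
            mul_le_mul_of_nonneg_left (abs_sin_le_one' _) (Real.exp_pos _).le
        _ = Real.exp (-t * x) := mul_one _
  have htend : Tendsto F atTop (𝓝 0) := by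
    have hb1 : Tendsto (fun x : ℝ => Real.exp (-t * x) * ((|t| + |b|) / (t ^ 2 + b ^ 2)))
        atTop (𝓝 (0 * ((|t| + |b|) / (t ^ 2 + b ^ 2)))) := by
      refine Tendsto.mul_const _ ?_
      exact Real.tendsto_exp_atBot.comp (tendsto_id.const_mul_atTop_of_neg (by linarith))
    rw [zero_mul] at hb1
    refine squeeze_zero_norm (fun x => ?_) hb1
    rw [hF]
    simp only [norm_div, norm_neg, norm_mul, Real.norm_eq_abs, Real.abs_exp]
    rw [abs_of_pos (by positivity : (0:ℝ) < t ^ 2 + b ^ 2), div_le_iff₀ (by positivity)]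
    have hbnd : |t * Real.sin (b * x) + b * Real.cos (b * x)| ≤ |t| + |b| := by
      calc |t * Real.sin (b * x) + b * Real.cos (b * x)|
          ≤ |t * Real.sin (b * x)| + |b * Real.cos (b * x)| := abs_add_le _ _
        _ ≤ |t| * 1 + |b| * 1 := by
            rw [abs_mul, abs_mul]
            gcongr
            · exact abs_sin_le_one' _
            · exact Real.abs_cos_le_one _
        _ = |t| + |b| := by ring
    calc Real.exp (-t * x) * |t * Real.sin (b * x) + b * Real.cos (b * x)|
        ≤ Real.exp (-t * x) * (|t| + |b|) :=
          mul_le_mul_of_nonneg_left hbnd (Real.exp_pos _).le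
      _ = Real.exp (-t * x) * ((|t| + |b|) / (t ^ 2 + b ^ 2)) * (t ^ 2 + b ^ 2) := by
          field_simp
  have hmain := MeasureTheory.integral_Ioi_of_hasDerivAt_of_tendsto' hderiv hint htend
  rw [hmain, hF]
  simp
  field_simp

theorem stmt_2 (a b : ℝ) (ha : 1 < a) (hb : b ≠ 0) :
    (∫ x in Set.Ioi (0:ℝ),
        (Real.exp x - 1) / x * Real.exp (-a * x) * Real.sin (b * x))
      = Real.arctan (a / b) - Real.arctan ((a - 1) / b) := by
  have ha1 : (0:ℝ) < a - 1 := by linarith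
  have hle : a - 1 ≤ a := by linarith
  -- Step 1: rewrite the integrand as an inner integral over t
  have step1 : ∀ x ∈ Ioi (0:ℝ),
      (Real.exp x - 1) / x * Real.exp (-a * x) * Real.sin (b * x)
        = ∫ t in Ioc (a-1) a, Real.exp (-t * x) * Real.sin (b * x) := by
    intro x hx
    have hxpos : (0:ℝ) < x := hx
    have hx0 : x ≠ 0 := ne_of_gt hxpos
    rw [← intervalIntegral.integral_of_le hle, intervalIntegral.integral_mul_const]
    have hrw : ∀ t : ℝ, Real.exp (-t * x) = Real.exp (-x * t) := fun t => by ring_nf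
    simp only [hrw]
    have hcm : (∫ t in (a-1)..a, Real.exp (-x * t))
        = (-x)⁻¹ • ∫ u in (-x)*(a-1)..(-x)*a, Real.exp u :=
      intervalIntegral.integral_comp_mul_left (fun u => Real.exp u) (by simpa using hx0)
    rw [hcm, integral_exp, smul_eq_mul]
    have hex : Real.exp (-x * (a-1)) = Real.exp x * Real.exp (-a * x) := by
      rw [← Real.exp_add]; ring_nf
    have hex2 : Real.exp (-x * a) = Real.exp (-a * x) := by ring_nf
    rw [hex, hex2, inv_neg]
    field_simp
    ring
  -- the two-variable function and its integrability
  set g : ℝ × ℝ → ℝ := fun p => Real.exp (-p.2 * p.1) * Real.sin (b * p.1) with hg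
  have hgc : Continuous g := by
    apply Continuous.mul
    · exact Real.continuous_exp.comp ((continuous_snd.neg).mul continuous_fst)
    · exact Real.continuous_sin.comp (continuous_const.mul continuous_fst)
  have hSfin : volume (Ioc (a-1) a) < ⊤ := measure_Ioc_lt_top
  have hSmeas : (volume (Ioc (a-1) a)).toReal = 1 := by
    rw [Real.volume_Ioc]; norm_num
  have hmeas : AEStronglyMeasurable g
      ((volume.restrict (Ioi (0:ℝ))).prod (volume.restrict (Ioc (a-1) a))) :=
    hgc.aestronglyMeasurable
  have hprod : Integrable g
      ((volume.restrict (Ioi (0:ℝ))).prod (volume.restrict (Ioc (a-1) a))) := by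
    rw [MeasureTheory.integrable_prod_iff hmeas]
    constructor
    · filter_upwards with x
      exact (hgc.comp (continuous_const.prodMk continuous_id)).integrableOn_Ioc
    · have hbase : IntegrableOn (fun x => Real.exp (-(a-1) * x)) (Ioi (0:ℝ)) :=
        exp_neg_integrableOn_Ioi 0 ha1
      refine hbase.mono' hmeas.norm.integral_prod_right' ?_
      filter_upwards [ae_restrict_mem measurableSet_Ioi] with x hx
      have hxpos : (0:ℝ) < x := hx
      have hnn : 0 ≤ ∫ t in Ioc (a-1) a, ‖g (x, t)‖ :=
        integral_nonneg fun t => norm_nonneg _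
      rw [Real.norm_eq_abs, abs_of_nonneg hnn]
      have hb1 : ∀ t ∈ Ioc (a-1) a, ‖g (x, t)‖ ≤ Real.exp (-(a-1) * x) := by
        intro t htS
        rw [hg]
        simp only [norm_mul, Real.norm_eq_abs, Real.abs_exp]
        calc Real.exp (-t * x) * |Real.sin (b * x)|
            ≤ Real.exp (-(a-1) * x) * 1 := by
              apply mul_le_mul
              · apply Real.exp_le_exp.2
                have h' : a - 1 ≤ t := le_of_lt htS.1
                nlinarith
              · exact abs_sin_le_one' _
              · exact abs_nonneg _
              · exact (Real.exp_pos _).le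
          _ = Real.exp (-(a-1) * x) := mul_one _
      calc (∫ t in Ioc (a-1) a, ‖g (x, t)‖)
          ≤ ∫ _t in Ioc (a-1) a, Real.exp (-(a-1) * x) := by
            apply setIntegral_mono_on
            · exact (hgc.comp (continuous_const.prodMk continuous_id)).norm.integrableOn_Ioc
            · exact integrableOn_const hSfin.ne
            · exact measurableSet_Ioc
            · exact hb1
        _ = (volume (Ioc (a-1) a)).toReal * Real.exp (-(a-1) * x) := by
            rw [setIntegral_const, smul_eq_mul, measureReal_def]
        _ = Real.exp (-(a-1) * x) := by rw [hSmeas, one_mul]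
  -- Fubini
  have swap : (∫ x in Ioi (0:ℝ), ∫ t in Ioc (a-1) a, Real.exp (-t * x) * Real.sin (b * x))
      = ∫ t in Ioc (a-1) a, ∫ x in Ioi (0:ℝ), Real.exp (-t * x) * Real.sin (b * x) :=
    MeasureTheory.integral_integral_swap hprod
  rw [setIntegral_congr_fun measurableSet_Ioi step1, swap]
  -- inner integral via laplace_sin
  have step2 : ∀ t ∈ Ioc (a-1) a,
      (∫ x in Ioi (0:ℝ), Real.exp (-t * x) * Real.sin (b * x)) = b / (t ^ 2 + b ^ 2) :=
    fun t htS => laplace_sin t b (lt_trans ha1 htS.1)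
  rw [setIntegral_congr_fun measurableSet_Ioc step2]
  -- final: ∫ t in (a-1)..a, b/(t²+b²) = arctan(a/b) - arctan((a-1)/b)
  rw [← intervalIntegral.integral_of_le hle]
  have key : (∫ t in (a-1)..a, b / (t ^ 2 + b ^ 2))
      = b⁻¹ * ∫ t in (a-1)..a, (fun u => 1 / (1 + u ^ 2)) (t / b) := by
    rw [← intervalIntegral.integral_const_mul]
    congr 1 with t
    have hb2 : b ^ 2 ≠ 0 := pow_ne_zero _ hb
    field_simp
    ring
  rw [key, integral_comp_div (fun u => 1 / (1 + u ^ 2)) hb,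
    integral_one_div_one_add_sq, smul_eq_mul]
  field_simp
end

section
/- For real numbers $a > 1$ and $b \in \mathbb{R}$, $\int_0^\infty \frac{e^x - 1}{x} e^{-(a - ib)x}\,dx = \log\left(\frac{a - ib}{a - 1 - ib}\right)$, where $\log$ is the principal branch of the complex logarithm. -/
open MeasureTheory Set Complex intervalIntegral

lemma aux_integral_cexp_Ioi {c : ℂ} (hc : 0 < c.re) :
    ∫ x in Set.Ioi (0:ℝ), Complex.exp (-c * x) = c⁻¹ := by
  have hc0 : c ≠ 0 := fun h => by simp [h] at hc
  have hint : IntegrableOn (fun x : ℝ => Complex.exp (-c * x)) (Set.Ioi 0) := by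
    refine (exp_neg_integrableOn_Ioi 0 hc).mono'
      ((Complex.continuous_exp.comp (by continuity)).aestronglyMeasurable) ?_
    filter_upwards with x
    simp [Complex.norm_exp]
  have hderiv : ∀ x ∈ Set.Ici (0:ℝ),
      HasDerivAt (fun x : ℝ => -Complex.exp (-c * x) / c) (Complex.exp (-c * x)) x := by
    intro x _
    have h1 : HasDerivAt (fun w : ℂ => -Complex.exp (-c * w) / c) (Complex.exp (-c * x)) (x : ℂ) := by
      have h2 := (((hasDerivAt_id ((x:ℝ) : ℂ)).const_mul (-c)).cexp.neg).div_const c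
      refine h2.congr_deriv ?_
      field_simp
      rfl
    exact h1.comp_ofReal
  have htend : Filter.Tendsto (fun x : ℝ => -Complex.exp (-c * x) / c) Filter.atTop (nhds 0) := by
    have h3 : Filter.Tendsto (fun x : ℝ => Complex.exp (-c * x)) Filter.atTop (nhds 0) := by
      rw [tendsto_zero_iff_norm_tendsto_zero]
      have : ∀ x : ℝ, ‖Complex.exp (-c * x)‖ = Real.exp (-c.re * x) := by
        intro x; simp [Complex.norm_exp]
      simp_rw [this]
      exact Real.tendsto_exp_atBot.comp (Filter.tendsto_id.const_mul_atTop_of_neg (by linarith))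
    simpa using (h3.neg).div_const c
  have := MeasureTheory.integral_Ioi_of_hasDerivAt_of_tendsto' hderiv hint htend
  rw [this]
  simp [hc0]
  ring

theorem stmt_3 (a b : ℝ) (ha : 1 < a) :
    (∫ x in Set.Ioi (0:ℝ),
        ((Real.exp x - 1) / x : ℂ) * Complex.exp (-(↑a - ↑b * Complex.I) * ↑x))
      = Complex.log ((↑a - ↑b * Complex.I) / (↑a - 1 - ↑b * Complex.I)) := by
  set p : ℂ := ↑a - 1 - ↑b * Complex.I with hp_def
  have hpre : p.re = a - 1 := by simp [hp_def]
  have hpim : p.im = -b := by simp [hp_def]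
  have hpre' : 0 < p.re := by rw [hpre]; linarith
  have hp1 : (↑a - ↑b * Complex.I : ℂ) = p + 1 := by ring
  -- Step 1: rewrite integrand
  have step1 : ∀ x ∈ Set.Ioi (0:ℝ),
      ((Real.exp x - 1) / x : ℂ) * Complex.exp (-(↑a - ↑b * Complex.I) * ↑x)
        = ∫ t in Set.Ioc (0:ℝ) 1, Complex.exp (-(p + t) * x) := by
    intro x hx
    rw [Set.mem_Ioi] at hx
    have hx0 : (x:ℂ) ≠ 0 := by exact_mod_cast hx.ne'
    rw [← intervalIntegral.integral_of_le zero_le_one]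
    have key : ∀ t : ℝ, Complex.exp (-(p + t) * x) = Complex.exp (-p * x) * Complex.exp ((-x : ℂ) * t) := by
      intro t
      rw [← Complex.exp_add]
      congr 1
      push_cast
      ring
    simp_rw [key]
    rw [intervalIntegral.integral_const_mul,
      integral_exp_mul_complex (show (-x : ℂ) ≠ 0 by simpa using hx0)]
    have hE : Complex.exp (x : ℂ) ≠ 0 := Complex.exp_ne_zero _
    rw [hp1]
    have h2 : Complex.exp (-(p + 1) * x) = Complex.exp (-p * x) * (Complex.exp (x:ℂ))⁻¹ := by
      rw [← Complex.exp_neg, ← Complex.exp_add]; ring_nf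
    have h3 : Complex.exp (-(x : ℂ)) = (Complex.exp (x:ℂ))⁻¹ := Complex.exp_neg _
    have h4 : ((Real.exp x : ℂ)) = Complex.exp (x : ℂ) := Complex.ofReal_exp x
    simp only [Complex.ofReal_one, Complex.ofReal_zero, mul_one, mul_zero, Complex.exp_zero]
    rw [h2, h3, h4]
    field_simp
    ring
  rw [MeasureTheory.setIntegral_congr_fun measurableSet_Ioi step1]
  -- Step 2: Fubini
  have hint : Integrable (Function.uncurry fun (x t : ℝ) => Complex.exp (-(p + t) * x))
      ((volume.restrict (Set.Ioi 0)).prod (volume.restrict (Set.Ioc 0 1))) := by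
    have hmeas : AEStronglyMeasurable (Function.uncurry fun (x t : ℝ) => Complex.exp (-(p + t) * x))
        ((volume.restrict (Set.Ioi 0)).prod (volume.restrict (Set.Ioc 0 1))) := by
      apply Continuous.aestronglyMeasurable
      show Continuous fun q : ℝ × ℝ => Complex.exp (-(p + (q.2:ℂ)) * (q.1:ℂ))
      fun_prop
    have hg : Integrable (fun q : ℝ × ℝ => Real.exp (-(a-1) * q.1) * 1)
        ((volume.restrict (Set.Ioi 0)).prod (volume.restrict (Set.Ioc 0 1))) :=
      (exp_neg_integrableOn_Ioi 0 (by linarith)).mul_prod (integrable_const 1)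
    refine hg.mono' hmeas ?_
    rw [MeasureTheory.Measure.prod_restrict]
    filter_upwards [MeasureTheory.ae_restrict_mem (measurableSet_Ioi.prod measurableSet_Ioc)]
      with q hq
    obtain ⟨hq1, hq2⟩ := hq
    rw [Set.mem_Ioi] at hq1
    rw [Set.mem_Ioc] at hq2
    simp only [Function.uncurry]
    calc ‖Complex.exp (-(p + (q.2:ℂ)) * (q.1:ℂ))‖ = Real.exp ((-(p + (q.2:ℂ)) * (q.1:ℂ)).re) := by
          rw [Complex.norm_exp]
      _ ≤ Real.exp (-(a-1) * q.1) * 1 := by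
          rw [mul_one]
          apply Real.exp_le_exp.mpr
          have hre : (-(p + (q.2:ℂ)) * (q.1:ℂ)).re = -(a - 1 + q.2) * q.1 := by
            simp [Complex.mul_re, hpre, hpim]
          rw [hre]
          nlinarith [hq2.1.le]
  rw [MeasureTheory.integral_integral_swap hint]
  -- Step 3: inner integral
  have step3 : ∀ t ∈ Set.Ioc (0:ℝ) 1,
      (∫ x in Set.Ioi (0:ℝ), Complex.exp (-(p + t) * x)) = (p + t)⁻¹ := by
    intro t ht
    refine aux_integral_cexp_Ioi ?_
    have : (p + (t:ℂ)).re = a - 1 + t := by simp [hpre]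
    rw [this]
    linarith [ht.1]
  rw [MeasureTheory.setIntegral_congr_fun measurableSet_Ioc step3]
  -- Step 4: FTC
  rw [← intervalIntegral.integral_of_le zero_le_one]
  have hne : ∀ t : ℝ, t ∈ Set.uIcc (0:ℝ) 1 → p + t ≠ 0 := by
    intro t ht h0
    rw [Set.uIcc_of_le zero_le_one] at ht
    have h6 : (p + (t:ℂ)).re = a - 1 + t := by simp [hpre]
    rw [h0] at h6
    simp at h6
    linarith [ht.1]
  have hderiv : ∀ t ∈ Set.uIcc (0:ℝ) 1,
      HasDerivAt (fun t : ℝ => Complex.log (p + t)) (p + t)⁻¹ t := by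
    intro t ht
    rw [Set.uIcc_of_le zero_le_one] at ht
    have hslit : p + (t:ℂ) ∈ Complex.slitPlane := by
      rw [Complex.mem_slitPlane_iff]
      left
      have : (p + (t:ℂ)).re = a - 1 + t := by simp [hpre]
      rw [this]
      linarith [ht.1]
    have h1 : HasDerivAt (fun w : ℂ => Complex.log (p + w)) (p + t)⁻¹ (t : ℂ) := by
      have := (Complex.hasDerivAt_log hslit).comp (t:ℂ)
        ((hasDerivAt_id (t:ℂ)).const_add p)
      exact this.congr_deriv (by simp)
    exact h1.comp_ofReal
  have hcont : IntervalIntegrable (fun t : ℝ => (p + t)⁻¹) volume 0 1 := by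
    apply ContinuousOn.intervalIntegrable
    exact ((continuous_const.add Complex.continuous_ofReal).continuousOn).inv₀ hne
  rw [intervalIntegral.integral_eq_sub_of_hasDerivAt hderiv hcont]
  -- Step 5: log arithmetic
  have hp0 : p ≠ 0 := fun h => by rw [h] at hpre'; simp at hpre'
  have hp10 : p + 1 ≠ 0 := by
    intro h
    have h7 : (p + 1).re = a := by simp [hpre]
    rw [h] at h7; simp at h7; linarith
  have harg1 : |Complex.arg (p + 1)| < Real.pi / 2 := by
    apply Complex.abs_arg_lt_pi_div_two_iff.mpr
    left
    have : (p + 1).re = a := by simp [hpre]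
    rw [this]; linarith
  have harginv : |Complex.arg p⁻¹| < Real.pi / 2 := by
    apply Complex.abs_arg_lt_pi_div_two_iff.mpr
    left
    rw [Complex.inv_re]
    exact div_pos hpre' (Complex.normSq_pos.mpr hp0)
  have hargp : |Complex.arg p| < Real.pi / 2 :=
    Complex.abs_arg_lt_pi_div_two_iff.mpr (Or.inl hpre')
  have hlogmul : Complex.log ((p + 1) * p⁻¹) = Complex.log (p + 1) + Complex.log p⁻¹ := by
    apply Complex.log_mul hp10 (inv_ne_zero hp0)
    obtain ⟨l1, r1⟩ := abs_lt.mp harg1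
    obtain ⟨l2, r2⟩ := abs_lt.mp harginv
    constructor
    · linarith [Real.pi_pos]
    · linarith [Real.pi_pos]
  have hloginv : Complex.log p⁻¹ = -Complex.log p := by
    apply Complex.log_inv
    intro h
    rw [h, abs_of_pos Real.pi_pos] at hargp
    linarith [Real.pi_pos]
  rw [hp1, div_eq_mul_inv, hlogmul, hloginv]
  push_cast
  ring
end

section
/- Let $\nu_{C,G,M}$ be the variance gamma Lévy measure with $C, G, M > 0$, let $\alpha \in (0, M)$ and $v \in \mathbb{R}$, and set $\zeta = v - i\alpha$. Then $\int_{\mathbb{R}\setminus\{0\}}(e^{i\zeta x} - 1)\,\nu_{C,G,M}(dx) = -C\left(\log\left(1 + \frac{i\zeta}{G}\right) + \log\left(1 - \frac{i\zeta}{M}\right)\right)$, with $\log$ the principal complex logarithm. -/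
open MeasureTheory Set Complex Filter

lemma integrableOn_cexp_Ioi {c : ℂ} (hc : 0 < c.re) :
    IntegrableOn (fun x : ℝ => Complex.exp (-(c * x))) (Ioi (0:ℝ)) := by
  apply Integrable.mono' (exp_neg_integrableOn_Ioi 0 hc)
  · exact (Complex.continuous_exp.comp (by continuity)).aestronglyMeasurable
  · refine Filter.Eventually.of_forall fun x => ?_
    simp only [Complex.norm_exp]
    apply le_of_eq
    congr 1
    simp [Complex.mul_re]

lemma integral_cexp_Ioi {c : ℂ} (hc : 0 < c.re) :
    ∫ x in Ioi (0:ℝ), Complex.exp (-(c * x)) = 1 / c := by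
  have hc0 : c ≠ 0 := fun h => by simp [h] at hc
  have hd : ∀ x : ℝ, HasDerivAt (fun y : ℝ => -(1/c) * Complex.exp (-(c * y)))
      (Complex.exp (-(c * x))) x := by
    intro x
    have h1 : HasDerivAt (fun y : ℝ => -(c * (y:ℂ))) (-c) x := by
      simpa using ((Complex.ofRealCLM.hasDerivAt (x := x)).const_mul c).fun_neg
    have h2 := (h1.cexp).const_mul (-(1/c))
    convert h2 using 1
    · rfl
    field_simp
  have htend : Tendsto (fun x : ℝ => -(1/c) * Complex.exp (-(c * x))) atTop (nhds 0) := by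
    rw [tendsto_zero_iff_norm_tendsto_zero]
    have : (fun x : ℝ => ‖-(1/c) * Complex.exp (-(c * x))‖)
        = fun x : ℝ => ‖(1:ℂ)/c‖ * Real.exp (-c.re * x) := by
      ext x
      simp only [norm_mul, norm_neg, Complex.norm_exp]
      congr 2
      simp [Complex.mul_re]
    rw [this]
    simpa using (Real.tendsto_exp_atBot.comp
      (tendsto_id.const_mul_atTop_of_neg (neg_lt_zero.2 hc) |>.comp tendsto_id)).const_mul ‖(1:ℂ)/c‖
  have := integral_Ioi_of_hasDerivAt_of_tendsto' (f := fun y : ℝ => -(1/c) * Complex.exp (-(c * y)))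
    (fun x _ => hd x) (integrableOn_cexp_Ioi hc) htend
  simp only [this]
  simp

lemma frullani_aux (a b : ℂ) (ha : 0 < a.re) (hb : 0 < b.re) :
    IntegrableOn (fun x : ℝ => (Complex.exp (-(a*x)) - Complex.exp (-(b*x))) / x)
        (Ioi (0:ℝ)) ∧
    ∫ x in Ioi (0:ℝ), (Complex.exp (-(a*x)) - Complex.exp (-(b*x))) / x
      = Complex.log b - Complex.log a := by
  set m : ℝ := min a.re b.re with hm_def
  have hm : 0 < m := lt_min ha hb
  set F : ℝ → ℝ → ℂ := fun x t => (b - a) * Complex.exp (-((a + (b-a)*t) * x)) with hF_def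
  have hre : ∀ t ∈ Icc (0:ℝ) 1, m ≤ (a + (b-a)*t).re := by
    intro t ht
    have : (a + (b-a)*t).re = a.re + (b.re - a.re) * t := by
      simp [Complex.add_re, Complex.mul_re]
    rw [this]
    rcases le_total a.re b.re with h | h
    · have := ht.1; have := ht.2
      nlinarith [min_le_left a.re b.re]
    · have := ht.1; have := ht.2
      nlinarith [min_le_right a.re b.re]
  have hne : ∀ t ∈ Icc (0:ℝ) 1, (a + (b-a)*t) ≠ 0 := by
    intro t ht h
    have := hre t ht
    rw [h] at this
    simp at this
    linarith
  have hFint : Integrable (Function.uncurry F)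
      ((volume.restrict (Ioi (0:ℝ))).prod (volume.restrict (Ioc (0:ℝ) 1))) := by
    have hbound : Integrable (fun z : ℝ × ℝ => (‖b - a‖ * Real.exp (-m * z.1)) * 1)
        ((volume.restrict (Ioi (0:ℝ))).prod (volume.restrict (Ioc (0:ℝ) 1))) := by
      exact Integrable.mul_prod ((exp_neg_integrableOn_Ioi 0 hm).const_mul _)
        (integrable_const 1)
    simp only [mul_one] at hbound
    apply Integrable.mono' hbound
    · apply Continuous.aestronglyMeasurable
      apply continuous_const.mul
      exact Complex.continuous_exp.comp
        (((continuous_const.add (continuous_const.mul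
          (Complex.continuous_ofReal.comp continuous_snd))).mul
          (Complex.continuous_ofReal.comp continuous_fst)).neg)
    · rw [Measure.prod_restrict, ae_restrict_iff' (measurableSet_Ioi.prod measurableSet_Ioc)]
      refine Filter.Eventually.of_forall fun z hz => ?_
      obtain ⟨hz1, hz2⟩ := hz
      have hz1' : (0:ℝ) < z.1 := hz1
      have ht : z.2 ∈ Icc (0:ℝ) 1 := Ioc_subset_Icc_self hz2
      simp only [Function.uncurry, hF_def, norm_mul, Complex.norm_exp]
      refine mul_le_mul_of_nonneg_left ?_ (norm_nonneg _)
      apply Real.exp_le_exp.2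
      have : (-((a + (b-a)*z.2) * z.1)).re = -((a + (b-a)*z.2).re * z.1) := by
        simp [Complex.mul_re]
      rw [this, neg_mul]
      gcongr
      exact hre z.2 ht
  have key1 : ∀ x ∈ Ioi (0:ℝ), (∫ t in Ioc (0:ℝ) 1, F x t)
      = (Complex.exp (-(a*x)) - Complex.exp (-(b*x))) / x := by
    intro x hx
    have hx0 : (x:ℂ) ≠ 0 := by exact_mod_cast (ne_of_gt hx)
    rw [← intervalIntegral.integral_of_le zero_le_one]
    have hφ : ∀ t : ℝ, HasDerivAt (fun t : ℝ => -(x:ℂ)⁻¹ * Complex.exp (-((a + (b-a)*t) * x)))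
        (F x t) t := by
      intro t
      have h1 : HasDerivAt (fun t : ℝ => -((a + (b-a)*(t:ℂ)) * x)) (-((b-a)*x)) t := by
        have hb1 : HasDerivAt (fun t : ℝ => a + (b-a)*(t:ℂ)) (b-a) t := by
          simpa using ((Complex.ofRealCLM.hasDerivAt (x := t)).const_mul (b-a)).const_add a
        exact (hb1.mul_const (x:ℂ)).neg
      have h2 := (h1.cexp).const_mul (-(x:ℂ)⁻¹)
      convert h2 using 1
      · rfl
      simp only [hF_def]
      field_simp
    have := intervalIntegral.integral_eq_sub_of_hasDerivAt (a := (0:ℝ)) (b := (1:ℝ))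
        (f := fun t : ℝ => -(x:ℂ)⁻¹ * Complex.exp (-((a + (b-a)*t) * x)))
        (fun t _ => hφ t) ?_
    · rw [this]
      show -(x:ℂ)⁻¹ * Complex.exp (-((a + (b-a)*((1:ℝ):ℂ)) * x))
          - -(x:ℂ)⁻¹ * Complex.exp (-((a + (b-a)*((0:ℝ):ℂ)) * x))
          = (Complex.exp (-(a*x)) - Complex.exp (-(b*x))) / x
      rw [show a + (b-a)*((1:ℝ):ℂ) = b by push_cast; ring,
          show a + (b-a)*((0:ℝ):ℂ) = a by push_cast; ring]
      field_simp
      ring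
    · apply Continuous.intervalIntegrable
      apply continuous_const.mul
      exact Complex.continuous_exp.comp
        (((continuous_const.add (continuous_const.mul Complex.continuous_ofReal)).mul
          continuous_const).neg)
  have key2 : ∀ t ∈ Ioc (0:ℝ) 1, (∫ x in Ioi (0:ℝ), F x t)
      = (b-a) / (a + (b-a)*t) := by
    intro t ht
    have hpos : 0 < (a + (b-a)*t).re := lt_of_lt_of_le hm (hre t (Ioc_subset_Icc_self ht))
    rw [MeasureTheory.integral_const_mul, integral_cexp_Ioi hpos]
    field_simp
  have key3 : (∫ t in Ioc (0:ℝ) 1, (b-a) / (a + (b-a)*t))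
      = Complex.log b - Complex.log a := by
    rw [← intervalIntegral.integral_of_le zero_le_one]
    have hψ : ∀ t ∈ uIcc (0:ℝ) 1, HasDerivAt (fun t : ℝ => Complex.log (a + (b-a)*t))
        ((b-a) / (a + (b-a)*t)) t := by
      intro t ht
      rw [uIcc_of_le zero_le_one] at ht
      have hb1 : HasDerivAt (fun t : ℝ => a + (b-a)*(t:ℂ)) (b-a) t := by
        simpa using ((Complex.ofRealCLM.hasDerivAt (x := t)).const_mul (b-a)).const_add a
      exact hb1.clog_real (Complex.mem_slitPlane_iff.2 (Or.inl
        (lt_of_lt_of_le hm (hre t ht))))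
    have hci : IntervalIntegrable (fun t : ℝ => (b-a) / (a + (b-a)*t)) volume 0 1 := by
      apply ContinuousOn.intervalIntegrable
      apply ContinuousOn.div continuousOn_const (by fun_prop)
      intro t ht
      rw [uIcc_of_le zero_le_one] at ht
      exact hne t ht
    have := intervalIntegral.integral_eq_sub_of_hasDerivAt
      (fun t ht => hψ t (by rwa [uIcc_of_le zero_le_one] at ht ⊢)) hci
    rw [this]
    have e1 : a + (b-a)*((1:ℝ):ℂ) = b := by push_cast; ring
    have e0 : a + (b-a)*((0:ℝ):ℂ) = a := by push_cast; ring
    rw [e1, e0]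
  constructor
  · apply (hFint.integral_prod_left).congr
    filter_upwards [ae_restrict_mem measurableSet_Ioi] with x hx
    exact key1 x hx
  · calc ∫ x in Ioi (0:ℝ), (Complex.exp (-(a*x)) - Complex.exp (-(b*x))) / x
        = ∫ x in Ioi (0:ℝ), ∫ t in Ioc (0:ℝ) 1, F x t := by
          exact (setIntegral_congr_fun measurableSet_Ioi key1).symm
      _ = ∫ t in Ioc (0:ℝ) 1, ∫ x in Ioi (0:ℝ), F x t := integral_integral_swap hFint
      _ = ∫ t in Ioc (0:ℝ) 1, (b-a) / (a + (b-a)*t) :=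
          setIntegral_congr_fun measurableSet_Ioc key2
      _ = Complex.log b - Complex.log a := key3

lemma clog_div_ofReal {z : ℂ} (hz : z ≠ 0) {r : ℝ} (hr : 0 < r) :
    Complex.log (z / r) = Complex.log z - Complex.log r := by
  have h1 : z / (r:ℂ) = ((r⁻¹ : ℝ) : ℂ) * z := by
    push_cast; field_simp
  have habs : ‖z / r‖ = ‖z‖ / r := by
    simp [norm_div, Complex.norm_real, abs_of_pos hr]
  have harg : (z / (r:ℂ)).arg = z.arg := by
    rw [h1]; exact Complex.arg_real_mul z (inv_pos.2 hr)
  apply Complex.ext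
  · simp only [Complex.log_re, Complex.sub_re, habs, Complex.norm_real, Real.norm_eq_abs, abs_of_pos hr,
      Real.log_div (norm_ne_zero_iff.2 hz) hr.ne']
  · simp only [Complex.log_im, Complex.sub_im, harg,
      Complex.arg_ofReal_of_nonneg hr.le, sub_zero]

noncomputable def vgDensity (C G M : ℝ) (x : ℝ) : ℝ :=
  C * ((if x < 0 then Real.exp (G * x) else 0)
      + (if 0 < x then Real.exp (-M * x) else 0)) / |x|

noncomputable def vgMeasure (C G M : ℝ) : Measure ℝ :=
  volume.withDensity (fun x => ENNReal.ofReal (vgDensity C G M x))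

lemma vgDensity_measurable (C G M : ℝ) : Measurable (vgDensity C G M) := by
  unfold vgDensity
  apply Measurable.div
  · apply Measurable.const_mul
    apply Measurable.add
    · exact Measurable.ite measurableSet_Iio (by fun_prop) measurable_const
    · exact Measurable.ite measurableSet_Ioi (by fun_prop) measurable_const
  · exact measurable_abs

theorem stmt_9 (C G M α v : ℝ) (hC : 0 < C) (hG : 0 < G) (hM : 0 < M)
    (hα : 0 < α) (hαM : α < M) :
    (∫ x in {0}ᶜ,
        (Complex.exp (Complex.I * (↑v - ↑α * Complex.I) * ↑x) - 1)
        ∂(vgMeasure C G M))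
      = -(C : ℂ) * (Complex.log (1 + Complex.I * (↑v - ↑α * Complex.I) / ↑G)
          + Complex.log (1 - Complex.I * (↑v - ↑α * Complex.I) / ↑M)) := by
  set w : ℂ := Complex.I * (↑v - ↑α * Complex.I) with hw
  have hwre : w.re = α := by simp [hw, Complex.mul_re]
  have hMw : 0 < ((M:ℂ) - w).re := by
    simp only [Complex.sub_re, Complex.ofReal_re, hwre]; linarith
  have hGw : 0 < ((G:ℂ) + w).re := by
    simp only [Complex.add_re, Complex.ofReal_re, hwre]; linarith
  have hMne : ((M:ℂ) - w) ≠ 0 := fun h => by rw [h] at hMw; simp at hMw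
  have hGne : ((G:ℂ) + w) ≠ 0 := fun h => by rw [h] at hGw; simp at hGw
  have hMre : (0:ℝ) < ((M:ℂ):ℂ).re := by simpa using hM
  have hGre : (0:ℝ) < ((G:ℂ):ℂ).re := by simpa using hG
  have hdmeas : Measurable (fun x => (vgDensity C G M x).toNNReal) :=
    (vgDensity_measurable C G M).real_toNNReal
  set g : ℝ → ℂ := fun x => (vgDensity C G M x).toNNReal • (Complex.exp (w * x) - 1) with hg
  have hstep : (∫ x in ({0}ᶜ : Set ℝ),
      (Complex.exp (w * ↑x) - 1) ∂(vgMeasure C G M)) = ∫ x in ({0}ᶜ : Set ℝ), g x := by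
    rw [vgMeasure]
    exact setIntegral_withDensity_eq_setIntegral_smul hdmeas _
      (measurableSet_singleton (0:ℝ)).compl
  -- pointwise identifications
  have posEq : ∀ x ∈ Ioi (0:ℝ), g x
      = (C:ℂ) * ((Complex.exp (-(((M:ℂ)-w) * x)) - Complex.exp (-((M:ℂ) * x))) / x) := by
    intro x hx
    have hx' : (0:ℝ) < x := hx
    have hd : vgDensity C G M x = C * Real.exp (-M * x) / x := by
      unfold vgDensity
      rw [if_neg (by linarith), if_pos hx', abs_of_pos hx']
      ring
    have hnn : 0 ≤ vgDensity C G M x := by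
      rw [hd]; positivity
    rw [hg]
    simp only [hd, NNReal.smul_def, Real.coe_toNNReal _ (by positivity : (0:ℝ) ≤ C * Real.exp (-M * x) / x)]
    rw [Complex.real_smul]
    push_cast
    rw [show -(((M:ℂ)-w) * x) = w * x + -((M:ℂ) * x) by ring, Complex.exp_add]
    have hxc : (x:ℂ) ≠ 0 := by exact_mod_cast hx'.ne'
    field_simp
  have negEq : ∀ x ∈ Ioi (0:ℝ), g (-x)
      = (C:ℂ) * ((Complex.exp (-(((G:ℂ)+w) * x)) - Complex.exp (-((G:ℂ) * x))) / x) := by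
    intro x hx
    have hx' : (0:ℝ) < x := hx
    have hd : vgDensity C G M (-x) = C * Real.exp (-G * x) / x := by
      unfold vgDensity
      rw [if_pos (by linarith), if_neg (by linarith), abs_neg, abs_of_pos hx']
      ring_nf
    have hnn : 0 ≤ vgDensity C G M (-x) := by
      rw [hd]; positivity
    rw [hg]
    simp only [hd, NNReal.smul_def, Real.coe_toNNReal _ (by positivity : (0:ℝ) ≤ C * Real.exp (-G * x) / x)]
    rw [Complex.real_smul]
    push_cast
    rw [show -(((G:ℂ)+w) * x) = w * (-x) + -((G:ℂ) * x) by ring, Complex.exp_add]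
    have hxc : (x:ℂ) ≠ 0 := by exact_mod_cast hx'.ne'
    field_simp
  obtain ⟨hIntM, hValM⟩ := frullani_aux ((M:ℂ) - w) (M:ℂ) hMw hMre
  obtain ⟨hIntG, hValG⟩ := frullani_aux ((G:ℂ) + w) (G:ℂ) hGw hGre
  have hIoiInt : IntegrableOn g (Ioi (0:ℝ)) := by
    apply IntegrableOn.congr_fun (hIntM.const_mul (C:ℂ)) _ measurableSet_Ioi
    intro x hx; exact (posEq x hx).symm
  have h_map : (volume.restrict (Ioi (0:ℝ))).map Neg.neg = volume.restrict (Iio (0:ℝ)) := by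
    conv => rhs; rw [← Measure.map_neg_eq_self (volume : Measure ℝ),
      measurableEmbedding_neg.restrict_map]
    simp
  have hIioInt : IntegrableOn g (Iio (0:ℝ)) := by
    rw [IntegrableOn, ← h_map, measurableEmbedding_neg.integrable_map_iff]
    apply IntegrableOn.congr_fun (hIntG.const_mul (C:ℂ)) _ measurableSet_Ioi
    intro x hx; exact (negEq x hx).symm
  have hIoiVal : (∫ x in Ioi (0:ℝ), g x)
      = (C:ℂ) * (Complex.log (M:ℂ) - Complex.log ((M:ℂ) - w)) := by
    rw [setIntegral_congr_fun measurableSet_Ioi posEq, MeasureTheory.integral_const_mul, hValM]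
  have hIioVal : (∫ x in Iio (0:ℝ), g x)
      = (C:ℂ) * (Complex.log (G:ℂ) - Complex.log ((G:ℂ) + w)) := by
    rw [← h_map, measurableEmbedding_neg.integral_map]
    rw [setIntegral_congr_fun measurableSet_Ioi (fun x hx => negEq x hx),
      MeasureTheory.integral_const_mul, hValG]
  have hdisj : Disjoint (Iio (0:ℝ)) (Ioi 0) := by
    rw [Set.disjoint_left]
    intro x hx hx'
    have h1 : x < 0 := hx
    have h2 : 0 < x := hx'
    linarith
  rw [hstep, ← Set.Iio_union_Ioi,
    setIntegral_union hdisj measurableSet_Ioi hIioInt hIoiInt, hIoiVal, hIioVal]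
  have hG0 : (G:ℂ) ≠ 0 := by exact_mod_cast hG.ne'
  have hM0 : (M:ℂ) ≠ 0 := by exact_mod_cast hM.ne'
  have e1 : (1 : ℂ) + w / G = ((G:ℂ) + w) / G := by
    rw [eq_div_iff hG0, add_mul, div_mul_cancel₀ _ hG0, one_mul, add_comm]
  have e2 : (1 : ℂ) - w / M = ((M:ℂ) - w) / M := by
    rw [eq_div_iff hM0, sub_mul, div_mul_cancel₀ _ hM0, one_mul]
  rw [e1, e2, clog_div_ofReal hGne hG, clog_div_ofReal hMne hM]
  ring
end

section
/- Let $\nu_{C,G,M}$ be the variance gamma Lévy measure with $C, G > 0$ and $M > 2$, let $\alpha \in (1, M - 1)$, $v \in \mathbb{R}$, and $\zeta = v - i\alpha$. Then $\int_{\mathbb{R}\setminus\{0\}} e^{i\zeta x}(e^x - 1)\,\nu_{C,G,M}(dx) = C\log\left(\frac{M - i\zeta}{M - 1 - i\zeta}\cdot\frac{G + i\zeta}{G + 1 + i\zeta}\right)$, with $\log$ interpreted as the sum of principal logarithms $\log\frac{M-i\zeta}{M-1-i\zeta} + \log\frac{G+i\zeta}{G+1+i\zeta}$. -/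
open MeasureTheory

open Set Complex
open scoped ENNReal NNReal


lemma cexp_integrableOn (z : ℂ) (hz : 0 < z.re) :
    IntegrableOn (fun x : ℝ => Complex.exp (-z * x)) (Set.Ioi (0:ℝ)) := by
  apply Integrable.mono' (exp_neg_integrableOn_Ioi 0 hz)
  · exact (Complex.continuous_exp.comp (continuous_const.mul Complex.continuous_ofReal)).aestronglyMeasurable
  · filter_upwards with x
    rw [Complex.norm_exp]
    simp [Complex.neg_re, Complex.mul_re]

lemma integral_cexp_neg_Ioi (z : ℂ) (hz : 0 < z.re) :
    ∫ x : ℝ in Set.Ioi (0:ℝ), Complex.exp (-z * x) = 1 / z := by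
  have hz0 : z ≠ 0 := fun h => by simp [h] at hz
  have hderiv : ∀ x ∈ Set.Ici (0:ℝ),
      HasDerivAt (fun x : ℝ => -Complex.exp (-z * x) / z) (Complex.exp (-z * x)) x := by
    intro x _
    have h1 : HasDerivAt (fun x : ℝ => -z * (x:ℂ)) (-z) x := by
      simpa using (Complex.ofRealCLM.hasDerivAt (x := x)).const_mul (-z)
    have h2 := (h1.cexp).neg.div_const z
    convert h2 using 1
    · rfl
    · rfl
    · field_simp
  have htend : Filter.Tendsto (fun x : ℝ => -Complex.exp (-z * x) / z) Filter.atTop (nhds 0) := by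
    rw [tendsto_zero_iff_norm_tendsto_zero]
    have heq : (fun x : ℝ => ‖-Complex.exp (-z * x) / z‖) = fun x => Real.exp (-(z.re * x)) / ‖z‖ := by
      ext x
      rw [norm_div, norm_neg, Complex.norm_exp]
      simp [Complex.neg_re, Complex.mul_re]
    rw [heq]
    have h3 : Filter.Tendsto (fun x : ℝ => Real.exp (-(z.re * x))) Filter.atTop (nhds 0) :=
      Real.tendsto_exp_neg_atTop_nhds_zero.comp
        (Filter.Tendsto.const_mul_atTop hz Filter.tendsto_id)
    simpa using h3.div_const ‖z‖
  have := MeasureTheory.integral_Ioi_of_hasDerivAt_of_tendsto' hderiv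
    (cexp_integrableOn z hz) htend
  rw [this]
  simp
  ring


lemma log_div_pos_re {a b : ℂ} (ha : 0 < a.re) (hb : 0 < b.re) :
    Complex.log (b / a) = Complex.log b - Complex.log a := by
  have ha0 : a ≠ 0 := fun h => by simp [h] at ha
  have hb0 : b ≠ 0 := fun h => by simp [h] at hb
  have harga : |a.arg| < Real.pi / 2 := Complex.abs_arg_lt_pi_div_two_iff.mpr (Or.inl ha)
  have hargb : |b.arg| < Real.pi / 2 := Complex.abs_arg_lt_pi_div_two_iff.mpr (Or.inl hb)
  have hnepi : a.arg ≠ Real.pi := by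
    intro h
    rw [h] at harga
    rw [abs_of_pos Real.pi_pos] at harga
    linarith [Real.pi_pos]
  have hargainv : (a⁻¹).arg = -a.arg := by rw [Complex.arg_inv, if_neg hnepi]
  rw [div_eq_mul_inv, Complex.log_mul hb0 (inv_ne_zero ha0) ?_, Complex.log_inv a hnepi,
    sub_eq_add_neg]
  rw [hargainv]
  constructor
  · cases abs_lt.mp harga; cases abs_lt.mp hargb; linarith
  · cases abs_lt.mp harga; cases abs_lt.mp hargb; linarith [Real.pi_pos]

lemma frullani (a b : ℂ) (ha : 0 < a.re) (hb : 0 < b.re) :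
    IntegrableOn (fun x : ℝ => (Complex.exp (-a * x) - Complex.exp (-b * x)) / x)
      (Set.Ioi (0:ℝ)) ∧
    ∫ x : ℝ in Set.Ioi (0:ℝ), (Complex.exp (-a * x) - Complex.exp (-b * x)) / x
      = Complex.log b - Complex.log a := by
  set m : ℝ := min a.re b.re with hm_def
  have hm : 0 < m := lt_min ha hb
  set c : ℝ → ℂ := fun t => a + t * (b - a) with hc_def
  have hc_re : ∀ t ∈ Set.Icc (0:ℝ) 1, m ≤ (c t).re := by
    intro t ht
    have : (c t).re = (1 - t) * a.re + t * b.re := by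
      simp [hc_def, Complex.add_re, Complex.mul_re, Complex.ofReal_re, Complex.ofReal_im,
        Complex.sub_re]
      ring
    rw [this]
    nlinarith [min_le_left a.re b.re, min_le_right a.re b.re, ht.1, ht.2]
  have hc_ne : ∀ t ∈ Set.Icc (0:ℝ) 1, c t ≠ 0 := by
    intro t ht h
    have := hc_re t ht
    rw [h] at this
    simp at this
    linarith
  -- continuity of F
  have hFcont : Continuous (fun p : ℝ × ℝ => (b - a) * Complex.exp (-(c p.1) * p.2)) := by
    apply continuous_const.mul
    apply Complex.continuous_exp.comp
    apply Continuous.mul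
    · exact (continuous_const.add ((Complex.continuous_ofReal.comp continuous_fst).mul
        continuous_const)).neg
    · exact Complex.continuous_ofReal.comp continuous_snd
  -- Integrability on product
  have hF : Integrable (Function.uncurry (fun t x : ℝ => (b - a) * Complex.exp (-(c t) * x)))
      ((volume.restrict (Set.Ioc (0:ℝ) 1)).prod (volume.restrict (Set.Ioi (0:ℝ)))) := by
    rw [Measure.prod_restrict]
    apply Integrable.mono' (g := fun p : ℝ × ℝ => ‖b - a‖ * Real.exp (-m * p.2))
    · rw [← Measure.prod_restrict]
      exact (integrable_const (‖b - a‖)).mul_prod (exp_neg_integrableOn_Ioi 0 hm)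
    · exact (hFcont.aestronglyMeasurable).restrict
    · rw [ae_restrict_iff' (measurableSet_Ioc.prod measurableSet_Ioi)]
      filter_upwards with p hp
      obtain ⟨hp1, hp2⟩ := hp
      rw [Function.uncurry, norm_mul, Complex.norm_exp]
      apply mul_le_mul_of_nonneg_left _ (norm_nonneg _)
      apply Real.exp_le_exp.mpr
      have h1 : m ≤ (c p.1).re := hc_re p.1 ⟨hp1.1.le, hp1.2⟩
      have h2 : (0:ℝ) < p.2 := hp2
      have : (-(c p.1) * p.2).re = -(c p.1).re * p.2 := by
        simp [Complex.neg_re, Complex.mul_re, Complex.ofReal_re, Complex.ofReal_im]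
      rw [this]
      nlinarith
  -- inner equality in t for fixed x > 0
  have hinner : ∀ x : ℝ, x ∈ Set.Ioi (0:ℝ) →
      (∫ t in Set.Ioc (0:ℝ) 1, (b - a) * Complex.exp (-(c t) * x))
        = (Complex.exp (-a * x) - Complex.exp (-b * x)) / x := by
    intro x hx
    have hx0 : (0:ℝ) < x := hx
    have hxC : (x:ℂ) ≠ 0 := Complex.ofReal_ne_zero.mpr hx0.ne'
    rw [← intervalIntegral.integral_of_le zero_le_one]
    have hderiv : ∀ t ∈ Set.uIcc (0:ℝ) 1,
        HasDerivAt (fun t : ℝ => Complex.exp (-(c t) * x) * (-(1:ℂ)/x))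
          ((b - a) * Complex.exp (-(c t) * x)) t := by
      intro t _
      have h1 : HasDerivAt (fun t : ℝ => -(c t) * (x:ℂ)) (-(b - a) * x) t := by
        have hc : HasDerivAt (fun t : ℝ => c t) (b - a) t := by
          simpa [hc_def] using
            ((Complex.ofRealCLM.hasDerivAt (x := t)).mul_const (b - a)).const_add a
        exact hc.neg.mul_const (x:ℂ)
      have h2 := (h1.cexp).mul_const (-(1:ℂ)/x)
      convert h2 using 1
      · rfl
      · field_simp
    have hint : IntervalIntegrable (fun t : ℝ => (b - a) * Complex.exp (-(c t) * x))
        volume 0 1 := by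
      apply Continuous.intervalIntegrable
      apply continuous_const.mul
      apply Complex.continuous_exp.comp
      exact ((continuous_const.add ((Complex.continuous_ofReal).mul
        continuous_const)).neg.mul continuous_const)
    rw [intervalIntegral.integral_eq_sub_of_hasDerivAt hderiv hint]
    have hc1 : c 1 = b := by simp [hc_def]
    have hc0 : c 0 = a := by simp [hc_def]
    rw [hc1, hc0]
    field_simp
    ring
  -- integrability claim
  have hmarg := hF.integral_prod_right
  have haeeq : (fun x : ℝ => ∫ t, Function.uncurry (fun t x : ℝ =>
        (b - a) * Complex.exp (-(c t) * x)) (t, x) ∂(volume.restrict (Set.Ioc (0:ℝ) 1)))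
      =ᵐ[volume.restrict (Set.Ioi (0:ℝ))]
      (fun x : ℝ => (Complex.exp (-a * x) - Complex.exp (-b * x)) / x) := by
    rw [Filter.EventuallyEq, ae_restrict_iff' measurableSet_Ioi]
    filter_upwards with x hx
    exact hinner x hx
  have hInt : IntegrableOn (fun x : ℝ => (Complex.exp (-a * x) - Complex.exp (-b * x)) / x)
      (Set.Ioi (0:ℝ)) := hmarg.congr haeeq
  refine ⟨hInt, ?_⟩
  -- Fubini swap
  have hswap := MeasureTheory.integral_integral_swap hF
  -- LHS of hswap: ∫ t, ∫ x
  have houter : ∀ t ∈ Set.Ioc (0:ℝ) 1,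
      (∫ x in Set.Ioi (0:ℝ), (b - a) * Complex.exp (-(c t) * x)) = (b - a) / (c t) := by
    intro t ht
    rw [MeasureTheory.integral_const_mul, integral_cexp_neg_Ioi (c t)
      (lt_of_lt_of_le hm (hc_re t ⟨ht.1.le, ht.2⟩))]
    field_simp
  have hlog : (∫ t in Set.Ioc (0:ℝ) 1, (b - a) / (c t)) = Complex.log b - Complex.log a := by
    rw [← intervalIntegral.integral_of_le zero_le_one]
    have hderiv : ∀ t ∈ Set.uIcc (0:ℝ) 1,
        HasDerivAt (fun t : ℝ => Complex.log (c t)) ((b - a) / (c t)) t := by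
      intro t ht
      rw [Set.uIcc_of_le zero_le_one] at ht
      have hc : HasDerivAt (fun t : ℝ => c t) (b - a) t := by
        simpa [hc_def] using
          ((Complex.ofRealCLM.hasDerivAt (x := t)).mul_const (b - a)).const_add a
      have hslit : c t ∈ Complex.slitPlane := Or.inl (lt_of_lt_of_le hm (hc_re t ht))
      have := (Complex.hasDerivAt_log hslit).comp t hc
      convert this using 1
      · rfl
      · rfl
      · field_simp
    have hint : IntervalIntegrable (fun t : ℝ => (b - a) / (c t)) volume 0 1 := by
      apply ContinuousOn.intervalIntegrable
      rw [Set.uIcc_of_le zero_le_one]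
      apply ContinuousOn.div continuousOn_const
      · exact ((continuous_const.add ((Complex.continuous_ofReal).mul
          continuous_const)).continuousOn)
      · exact fun t ht => hc_ne t ht
    rw [intervalIntegral.integral_eq_sub_of_hasDerivAt hderiv hint]
    have hc1 : c 1 = b := by simp [hc_def]
    have hc0 : c 0 = a := by simp [hc_def]
    rw [hc1, hc0]
  calc ∫ x : ℝ in Set.Ioi (0:ℝ), (Complex.exp (-a * x) - Complex.exp (-b * x)) / x
      = ∫ x in Set.Ioi (0:ℝ), ∫ t in Set.Ioc (0:ℝ) 1, (b - a) * Complex.exp (-(c t) * x) := by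
        apply setIntegral_congr_fun measurableSet_Ioi
        intro x hx
        exact (hinner x hx).symm
    _ = ∫ t in Set.Ioc (0:ℝ) 1, ∫ x in Set.Ioi (0:ℝ), (b - a) * Complex.exp (-(c t) * x) :=
        hswap.symm
    _ = ∫ t in Set.Ioc (0:ℝ) 1, (b - a) / (c t) := by
        apply setIntegral_congr_fun measurableSet_Ioc
        intro t ht
        exact houter t ht
    _ = Complex.log b - Complex.log a := hlog

theorem stmt_10 (C G M α v : ℝ) (hC : 0 < C) (hG : 0 < G) (hM : 2 < M)
    (hα : 1 < α) (hαM : α < M - 1) :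
    (∫ x in {0}ᶜ,
        Complex.exp (Complex.I * (↑v - ↑α * Complex.I) * ↑x) * (Complex.exp ↑x - 1)
        ∂(vgMeasure C G M))
      = (C : ℂ) *
          (Complex.log ((↑M - Complex.I * (↑v - ↑α * Complex.I))
              / (↑M - 1 - Complex.I * (↑v - ↑α * Complex.I)))
           + Complex.log ((↑G + Complex.I * (↑v - ↑α * Complex.I))
              / (↑G + 1 + Complex.I * (↑v - ↑α * Complex.I)))) := by
  set ζ : ℂ := Complex.I * (↑v - ↑α * Complex.I) with hζ_def
  have hζ : ζ = (α : ℂ) + (v : ℂ) * Complex.I := by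
    rw [hζ_def]; linear_combination (-(α:ℂ)) * Complex.I_sq
  set f : ℝ → ℂ := fun x => Complex.exp (ζ * x) * (Complex.exp x - 1) with hf_def
  set a₁ : ℂ := (M : ℂ) - 1 - ζ with ha₁_def
  set b₁ : ℂ := (M : ℂ) - ζ with hb₁_def
  set a₂ : ℂ := (G : ℂ) + 1 + ζ with ha₂_def
  set b₂ : ℂ := (G : ℂ) + ζ with hb₂_def
  have ha₁ : 0 < a₁.re := by rw [ha₁_def, hζ]; simp; linarith
  have hb₁ : 0 < b₁.re := by rw [hb₁_def, hζ]; simp; linarith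
  have ha₂ : 0 < a₂.re := by rw [ha₂_def, hζ]; simp; linarith
  have hb₂ : 0 < b₂.re := by rw [hb₂_def, hζ]; simp; linarith
  -- measurability of the density
  have hdmeas : Measurable (fun x => (vgDensity C G M x).toNNReal) := by
    apply Measurable.real_toNNReal
    unfold vgDensity
    apply Measurable.div
    · apply Measurable.const_mul
      exact (Measurable.ite measurableSet_Iio (by fun_prop) measurable_const).add
        (Measurable.ite measurableSet_Ioi (by fun_prop) measurable_const)
    · exact measurable_abs
  have hdnn : ∀ x, 0 ≤ vgDensity C G M x := by
    intro x
    unfold vgDensity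
    apply div_nonneg _ (abs_nonneg x)
    apply mul_nonneg hC.le
    apply add_nonneg <;> split <;> positivity
  -- rewrite the withDensity integral
  have hstep1 : (∫ x in ({0}ᶜ : Set ℝ), f x ∂(vgMeasure C G M))
      = ∫ x in ({0}ᶜ : Set ℝ), ((vgDensity C G M x : ℝ)) • f x ∂volume := by
    rw [show vgMeasure C G M
        = volume.withDensity (fun x => ((vgDensity C G M x).toNNReal : ℝ≥0∞)) from rfl]
    rw [setIntegral_withDensity_eq_setIntegral_smul hdmeas f
      (MeasurableSet.compl (measurableSet_singleton 0))]
    apply setIntegral_congr_fun (MeasurableSet.compl (measurableSet_singleton 0))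
    intro x _
    simp only [NNReal.smul_def, Real.coe_toNNReal _ (hdnn x)]
  -- pointwise identity on Ioi 0
  have hIoi_eq : ∀ x ∈ Set.Ioi (0:ℝ), ((vgDensity C G M x : ℝ)) • f x
      = (C : ℂ) * ((Complex.exp (-a₁ * x) - Complex.exp (-b₁ * x)) / x) := by
    intro x hx
    have hx0 : (0:ℝ) < x := hx
    have hxC : (x : ℂ) ≠ 0 := Complex.ofReal_ne_zero.mpr hx0.ne'
    rw [hf_def]
    unfold vgDensity
    rw [if_neg (not_lt.mpr hx0.le), if_pos hx0, abs_of_pos hx0]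
    have e1 : Complex.exp (-a₁ * x)
        = Complex.exp (-(M:ℂ) * x) * (Complex.exp (ζ * x) * Complex.exp (x:ℂ)) := by
      rw [← Complex.exp_add, ← Complex.exp_add, ha₁_def]; ring_nf
    have e2 : Complex.exp (-b₁ * x) = Complex.exp (-(M:ℂ) * x) * Complex.exp (ζ * x) := by
      rw [← Complex.exp_add, hb₁_def]; ring_nf
    rw [Complex.real_smul, e1, e2]
    push_cast
    field_simp
    ring
  -- pointwise identity for the negative side
  have hIio_eq : ∀ x ∈ Set.Ioi (0:ℝ), ((vgDensity C G M (-x) : ℝ)) • f (-x)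
      = (C : ℂ) * ((Complex.exp (-a₂ * x) - Complex.exp (-b₂ * x)) / x) := by
    intro x hx
    have hx0 : (0:ℝ) < x := hx
    have hxC : (x : ℂ) ≠ 0 := Complex.ofReal_ne_zero.mpr hx0.ne'
    rw [hf_def]
    unfold vgDensity
    rw [if_pos (by linarith : -x < 0), if_neg (by linarith : ¬ (0:ℝ) < -x), abs_neg,
      abs_of_pos hx0]
    have e1 : Complex.exp (-a₂ * x)
        = Complex.exp ((G:ℂ) * (-x)) * (Complex.exp (ζ * (-x:ℝ)) * Complex.exp ((-x:ℝ):ℂ)) := by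
      rw [← Complex.exp_add, ← Complex.exp_add, ha₂_def]; push_cast; ring_nf
    have e2 : Complex.exp (-b₂ * x)
        = Complex.exp ((G:ℂ) * (-x)) * Complex.exp (ζ * (-x:ℝ)) := by
      rw [← Complex.exp_add, hb₂_def]; push_cast; ring_nf
    rw [Complex.real_smul, e1, e2]
    push_cast
    field_simp
    ring
  -- integrability on the two half lines
  set g : ℝ → ℂ := fun x => ((vgDensity C G M x : ℝ)) • f x with hg_def
  have hIntIoi : IntegrableOn g (Set.Ioi (0:ℝ)) := by
    apply Integrable.congr (((frullani a₁ b₁ ha₁ hb₁).1).const_mul (C:ℂ))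
    rw [Filter.EventuallyEq, ae_restrict_iff' measurableSet_Ioi]
    filter_upwards with x hx
    exact (hIoi_eq x hx).symm
  have hn : ⇑(Homeomorph.neg ℝ) = (Neg.neg : ℝ → ℝ) := rfl
  have hmap : volume.restrict (Set.Iio (0:ℝ))
      = Measure.map Neg.neg (volume.restrict (Set.Ioi (0:ℝ))) := by
    have h1 : (Neg.neg ⁻¹' (Set.Iio (0:ℝ))) = Set.Ioi (0:ℝ) := by
      ext x; simp
    rw [← h1, ← Measure.restrict_map measurable_neg measurableSet_Iio,
      Measure.map_neg_eq_self]
  have hIntIio : IntegrableOn g (Set.Iio (0:ℝ)) := by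
    rw [IntegrableOn, hmap, ← hn,
      (Homeomorph.neg ℝ).measurableEmbedding.integrable_map_iff]
    apply Integrable.congr (((frullani a₂ b₂ ha₂ hb₂).1).const_mul (C:ℂ))
    rw [Filter.EventuallyEq, ae_restrict_iff' measurableSet_Ioi]
    filter_upwards with x hx
    simpa [Function.comp, hn, hg_def] using (hIio_eq x hx).symm
  -- split the integral
  have hsplit : ∫ x in ({0}ᶜ : Set ℝ), g x ∂volume
      = (∫ x in Set.Iio (0:ℝ), g x ∂volume) + ∫ x in Set.Ioi (0:ℝ), g x ∂volume := by
    rw [← Set.Iio_union_Ioi]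
    exact setIntegral_union ((Set.Iio_disjoint_Ici le_rfl).mono_right Set.Ioi_subset_Ici_self) measurableSet_Ioi hIntIio hIntIoi
  -- compute each side
  have hIoi_int : ∫ x in Set.Ioi (0:ℝ), g x ∂volume
      = (C : ℂ) * Complex.log (b₁ / a₁) := by
    rw [setIntegral_congr_fun measurableSet_Ioi hIoi_eq, MeasureTheory.integral_const_mul,
      (frullani a₁ b₁ ha₁ hb₁).2, log_div_pos_re ha₁ hb₁]
  have hIio_int : ∫ x in Set.Iio (0:ℝ), g x ∂volume
      = (C : ℂ) * Complex.log (b₂ / a₂) := by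
    have : ∫ x in Set.Iio (0:ℝ), g x ∂volume = ∫ x in Set.Ioi (0:ℝ), g (-x) ∂volume := by
      rw [hmap, ← hn, (Homeomorph.neg ℝ).measurableEmbedding.integral_map]
    rw [this, setIntegral_congr_fun measurableSet_Ioi hIio_eq, MeasureTheory.integral_const_mul,
      (frullani a₂ b₂ ha₂ hb₂).2, log_div_pos_re ha₂ hb₂]
  rw [hstep1, hsplit, hIoi_int, hIio_int, ha₁_def, hb₁_def, ha₂_def, hb₂_def]
  ring
end

section
/- Let $C, G > 0$, $M > 2$, $\alpha \in (1, M-1)$, $v \in \mathbb{R}$, and $\zeta = v - i\alpha$. Then for the variance gamma Lévy measure $\nu_{C,G,M}$, $\left|\int_{\mathbb{R}\setminus\{0\}} e^{i\zeta x}(e^x - 1)\,\nu_{C,G,M}(dx)\right| \le C\left(\frac{1}{G + \alpha} + \frac{1}{M - \alpha - 1}\right)$. -/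
open MeasureTheory
open Set Real

lemma intOn_Ioi {b : ℝ} (hb : 0 < b) : IntegrableOn (fun x => Real.exp (-(b * x))) (Ioi (0:ℝ)) := by
  simpa [neg_mul] using exp_neg_integrableOn_Ioi 0 hb

lemma intval_Ioi {b : ℝ} (hb : 0 < b) : ∫ x in Ioi (0:ℝ), Real.exp (-(b * x)) = 1 / b := by
  have := integral_comp_mul_left_Ioi (fun x => Real.exp (-x)) 0 hb
  simp only [mul_zero, integral_exp_neg_Ioi_zero, smul_eq_mul, mul_one] at this
  rw [this, one_div]

lemma intOn_Iio {b : ℝ} (hb : 0 < b) : IntegrableOn (fun x => Real.exp (b * x)) (Iio (0:ℝ)) := by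
  rw [IntegrableOn, restrict_Iio_eq_restrict_Iic, ← Measure.map_neg_eq_self (volume : Measure ℝ)]
  have m : MeasurableEmbedding fun x : ℝ => -x := (Homeomorph.neg ℝ).measurableEmbedding
  rw [Measure.restrict_map m.measurable measurableSet_Iic, m.integrable_map_iff]
  simp only [Function.comp_def, neg_preimage, neg_Iic, neg_zero]
  exact ((Iff.mpr integrableOn_Ici_iff_integrableOn_Ioi) (intOn_Ioi hb)).congr_fun
    (fun x _ => by rw [mul_neg]) measurableSet_Ici

lemma intval_Iio {b : ℝ} (hb : 0 < b) : ∫ x in Iio (0:ℝ), Real.exp (b * x) = 1 / b := by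
  rw [← integral_Iic_eq_integral_Iio]
  have := integral_comp_neg_Iic (0:ℝ) (fun x => Real.exp (-(b * x)))
  simp only [mul_neg, neg_neg, neg_zero] at this
  rw [this, ← integral_Ici_eq_integral_Ioi] at *
  rw [← intval_Ioi hb, ← integral_Ici_eq_integral_Ioi]

theorem stmt_11 (C G M α v : ℝ) (hC : 0 < C) (hG : 0 < G) (hM : 2 < M)
    (hα : 1 < α) (hαM : α < M - 1) :
    ‖∫ x in {0}ᶜ,
        Complex.exp (Complex.I * (↑v - ↑α * Complex.I) * ↑x) * (Complex.exp ↑x - 1)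
        ∂(vgMeasure C G M)‖
      ≤ C * (1 / (G + α) + 1 / (M - α - 1)) := by
  have hGα : (0:ℝ) < G + α := by linarith
  have hMα : (0:ℝ) < M - α - 1 := by linarith
  set F : ℝ → ℂ := fun x =>
    Complex.exp (Complex.I * (↑v - ↑α * Complex.I) * ↑x) * (Complex.exp ↑x - 1) with hFdef
  have hnormF : ∀ x : ℝ, ‖F x‖ = Real.exp (α * x) * |Real.exp x - 1| := by
    intro x
    rw [hFdef]
    rw [norm_mul, Complex.norm_exp,
      ← Complex.ofReal_exp, ← Complex.ofReal_one, ← Complex.ofReal_sub, Complex.norm_real, Real.norm_eq_abs]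
    congr 2
    simp [Complex.mul_re, Complex.mul_im]
  set g : ℝ → ℝ := fun x =>
    indicator (Iio 0) (fun x => C * Real.exp ((G + α) * x)) x
    + indicator (Ioi 0) (fun x => C * Real.exp (-((M - α - 1) * x))) x with hgdef
  have hg1 : Integrable (indicator (Iio (0:ℝ)) (fun x => C * Real.exp ((G + α) * x))) :=
    (integrable_indicator_iff measurableSet_Iio).mpr ((intOn_Iio hGα).const_mul C)
  have hg2 : Integrable (indicator (Ioi (0:ℝ)) (fun x => C * Real.exp (-((M - α - 1) * x)))) :=
    (integrable_indicator_iff measurableSet_Ioi).mpr ((intOn_Ioi hMα).const_mul C)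
  have hg_int : Integrable g := hg1.add hg2
  have hg_nonneg : ∀ x, 0 ≤ g x := by
    intro x
    apply add_nonneg <;> apply indicator_nonneg <;> intro y _ <;> positivity
  have hgval : ∫ x, g x = C * (1 / (G + α) + 1 / (M - α - 1)) := by
    rw [hgdef]
    rw [integral_add hg1 hg2, integral_indicator measurableSet_Iio,
      integral_indicator measurableSet_Ioi, integral_const_mul, integral_const_mul,
      intval_Iio hGα, intval_Ioi hMα]
    ring
  have hvg_nonneg : ∀ x, 0 ≤ vgDensity C G M x := by
    intro x
    unfold vgDensity
    have : (0:ℝ) ≤ (if x < 0 then Real.exp (G * x) else 0) + (if 0 < x then Real.exp (-M * x) else 0) := by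
      apply add_nonneg <;> split <;> positivity
    positivity
  -- pointwise bound
  have hbound : ∀ x : ℝ, vgDensity C G M x * ‖F x‖ ≤ g x := by
    intro x
    rcases lt_trichotomy x 0 with hx | hx | hx
    · have hex : Real.exp x ≤ 1 := Real.exp_le_one_iff.mpr hx.le
      have h1 : (1 - Real.exp x) / (-x) ≤ 1 := by
        rw [div_le_one (by linarith)]
        linarith [Real.add_one_le_exp x]
      have habs : |Real.exp x - 1| = 1 - Real.exp x := by
        rw [abs_of_nonpos (by linarith)]; ring
      have hd : vgDensity C G M x = C * Real.exp (G * x) / (-x) := by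
        unfold vgDensity
        rw [if_pos hx, if_neg (by linarith), abs_of_neg hx]
        ring_nf
      have hgx : g x = C * Real.exp ((G + α) * x) := by
        rw [hgdef]
        simp only [indicator]
        rw [if_pos (mem_Iio.mpr hx), if_neg (by simp only [mem_Ioi]; linarith), add_zero]
      rw [hd, hnormF, habs, hgx]
      have heq : C * Real.exp (G * x) / (-x) * (Real.exp (α * x) * (1 - Real.exp x))
          = (C * Real.exp ((G + α) * x)) * ((1 - Real.exp x) / (-x)) := by
        rw [add_mul, Real.exp_add]; ring
      rw [heq]
      exact mul_le_of_le_one_right (by positivity) h1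
    · subst hx
      have : vgDensity C G M 0 = 0 := by unfold vgDensity; norm_num
      rw [this, zero_mul]
      exact hg_nonneg 0
    · have hex : 1 ≤ Real.exp x := Real.one_le_exp_iff.mpr hx.le
      have h3 : (-x + 1) * Real.exp x ≤ 1 := by
        calc (-x + 1) * Real.exp x ≤ Real.exp (-x) * Real.exp x :=
              mul_le_mul_of_nonneg_right (Real.add_one_le_exp (-x)) (Real.exp_pos x).le
          _ = 1 := by rw [← Real.exp_add]; simp
      have h2 : (Real.exp x - 1) / x ≤ Real.exp x := by
        rw [div_le_iff₀ hx]; nlinarith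
      have habs : |Real.exp x - 1| = Real.exp x - 1 := abs_of_nonneg (by linarith)
      have hd : vgDensity C G M x = C * Real.exp (-M * x) / x := by
        unfold vgDensity
        rw [if_neg (by linarith), if_pos hx, abs_of_pos hx]
        ring_nf
      have hgx : g x = C * Real.exp (-((M - α - 1) * x)) := by
        rw [hgdef]
        simp only [indicator]
        rw [if_pos (mem_Ioi.mpr hx), if_neg (by simp only [mem_Iio]; linarith), zero_add]
      rw [hd, hnormF, habs, hgx]
      have heq : C * Real.exp (-M * x) / x * (Real.exp (α * x) * (Real.exp x - 1))
          = (C * (Real.exp (-M * x) * Real.exp (α * x))) * ((Real.exp x - 1) / x) := by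
        ring
      rw [heq]
      calc (C * (Real.exp (-M * x) * Real.exp (α * x))) * ((Real.exp x - 1) / x)
          ≤ (C * (Real.exp (-M * x) * Real.exp (α * x))) * Real.exp x :=
            mul_le_mul_of_nonneg_left h2 (by positivity)
        _ = C * Real.exp (-((M - α - 1) * x)) := by
            rw [← Real.exp_add, mul_assoc, ← Real.exp_add]
            congr 1
            ring
  -- measurability
  have hmeas : Measurable (fun x => ENNReal.ofReal (vgDensity C G M x)) := by
    apply ENNReal.measurable_ofReal.comp
    unfold vgDensity
    apply Measurable.div _ (measurable_abs)
    apply ((Measurable.ite measurableSet_Iio (by fun_prop) measurable_const).add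
      (Measurable.ite measurableSet_Ioi (by fun_prop) measurable_const)).const_mul
  have hFmeas : Measurable F := by
    rw [hFdef]; fun_prop
  -- main chain
  calc ‖∫ x in {0}ᶜ, F x ∂(vgMeasure C G M)‖
      ≤ (∫⁻ x in {0}ᶜ, ENNReal.ofReal ‖F x‖ ∂(vgMeasure C G M)).toReal :=
        norm_integral_le_lintegral_norm F
    _ ≤ ∫ x, g x := by
        rw [vgMeasure, restrict_withDensity (measurableSet_singleton (0:ℝ)).compl,
          lintegral_withDensity_eq_lintegral_mul _ hmeas
            (by exact ENNReal.measurable_ofReal.comp hFmeas.norm)]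
        apply ENNReal.toReal_le_of_le_ofReal (integral_nonneg hg_nonneg)
        calc ∫⁻ x in {0}ᶜ, (ENNReal.ofReal (vgDensity C G M x) * ENNReal.ofReal ‖F x‖) ∂volume
            ≤ ∫⁻ x in {0}ᶜ, ENNReal.ofReal (g x) ∂volume := by
              apply lintegral_mono
              intro x
              show ENNReal.ofReal (vgDensity C G M x) * ENNReal.ofReal ‖F x‖
                ≤ ENNReal.ofReal (g x)
              rw [← ENNReal.ofReal_mul (hvg_nonneg x)]
              exact ENNReal.ofReal_le_ofReal (hbound x)
          _ ≤ ∫⁻ x, ENNReal.ofReal (g x) ∂volume := setLIntegral_le_lintegral _ _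
          _ = ENNReal.ofReal (∫ x, g x) :=
              (ofReal_integral_eq_lintegral_ofReal hg_int
                (Filter.Eventually.of_forall hg_nonneg)).symm
    _ = C * (1 / (G + α) + 1 / (M - α - 1)) := hgval
end

section
/- Let $\sigma > 0$, $T > t \ge 0$, $\alpha > 1$, $K > 0$, $S > 0$, $C_1 > 0$, and let $\phi: \mathbb{R} \to \mathbb{C}$ satisfy $|\phi(v)| \le C_1 e^{-\sigma^2 v^2 (T-t)/2}$ for all $v \in \mathbb{R}$. If $a > 0$ satisfies $\left(\frac{K}{\pi}\left(\frac{K}{S}\right)^{-\alpha} C_1\right)^{1/4} \frac{1}{\sigma\sqrt{T-t}\,\varepsilon^{1/4}} \le a$ for some $\varepsilon > 0$, then $\left|\frac{1}{\pi}\int_a^\infty \frac{K^{-iv-\alpha+1}}{\alpha - 1 + iv}\,\phi(v)\, S^{\alpha+iv}\,dv\right| \le \varepsilon$. -/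
open MeasureTheory

private lemma sq_le_exp' (x : ℝ) (hx : 0 ≤ x) : x ^ 2 ≤ Real.exp x := by
  have h := Real.add_one_le_exp (x / 4)
  have h4 : Real.exp x = Real.exp (x / 4) ^ 4 := by
    rw [← Real.exp_nat_mul]; congr 1; push_cast; ring
  have h1 : (0:ℝ) ≤ x / 4 + 1 := by linarith
  have h3 : x ≤ (x / 4 + 1) ^ 2 := by nlinarith [sq_nonneg (x / 4 - 1)]
  have h2 : (x / 4 + 1) ^ 2 ≤ Real.exp (x / 4) ^ 2 := by nlinarith
  rw [h4]
  calc x ^ 2 ≤ ((x / 4 + 1) ^ 2) ^ 2 := by nlinarith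
    _ ≤ (Real.exp (x / 4) ^ 2) ^ 2 := by nlinarith
    _ = Real.exp (x / 4) ^ 4 := by ring

theorem stmt_14 (σ T t α K S C₁ ε a : ℝ) (φ : ℝ → ℂ)
    (hσ : 0 < σ) (ht : 0 ≤ t) (htT : t < T) (hα : 1 < α) (hK : 0 < K)
    (hS : 0 < S) (hC₁ : 0 < C₁) (hε : 0 < ε) (ha : 0 < a)
    (hφ : ∀ v : ℝ, ‖φ v‖ ≤ C₁ * Real.exp (-σ ^ 2 * v ^ 2 * (T - t) / 2))
    (hcond : (K / Real.pi * (K / S) ^ (-α) * C₁) ^ ((1 : ℝ) / 4)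
        * (1 / (σ * Real.sqrt (T - t) * ε ^ ((1 : ℝ) / 4))) ≤ a) :
    ‖(1 / (Real.pi : ℂ)) * ∫ v in Set.Ioi a,
        (K : ℂ) ^ (-(v : ℂ) * Complex.I - ↑α + 1)
          / (↑α - 1 + ↑v * Complex.I) * φ v
          * (S : ℂ) ^ ((α : ℂ) + ↑v * Complex.I)‖
      ≤ ε := by
  have hTt : (0:ℝ) < T - t := sub_pos.mpr htT
  have hπ : (0:ℝ) < Real.pi := Real.pi_pos
  have hKα : (0:ℝ) < K ^ (1 - α) := Real.rpow_pos_of_pos hK _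
  have hSα : (0:ℝ) < S ^ α := Real.rpow_pos_of_pos hS _
  set M : ℝ := 4 * C₁ * K ^ (1 - α) * S ^ α / (σ ^ 4 * (T - t) ^ 2) with hMdef
  have hM : 0 < M := by positivity
  -- pointwise bound
  have hbound : ∀ v ∈ Set.Ioi a, ‖(K : ℂ) ^ (-(v : ℂ) * Complex.I - ↑α + 1)
          / (↑α - 1 + ↑v * Complex.I) * φ v * (S : ℂ) ^ ((α : ℂ) + ↑v * Complex.I)‖
        ≤ M * v ^ (-5 : ℝ) := by
    intro v hv
    have hv0 : 0 < v := ha.trans hv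
    have h1 : ‖(K : ℂ) ^ (-(v : ℂ) * Complex.I - ↑α + 1)‖ = K ^ (1 - α) := by
      rw [Complex.norm_cpow_eq_rpow_re_of_pos hK]
      norm_num
      congr 1
      ring
    have h3 : ‖(S : ℂ) ^ ((α : ℂ) + ↑v * Complex.I)‖ = S ^ α := by
      rw [Complex.norm_cpow_eq_rpow_re_of_pos hS]
      norm_num
    have h2 : v ≤ ‖((α : ℂ) - 1 + ↑v * Complex.I)‖ := by
      have h := Complex.abs_im_le_norm ((α : ℂ) - 1 + ↑v * Complex.I)
      refine le_trans ?_ h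
      simp [abs_of_pos hv0]
    have hexp : Real.exp (-σ ^ 2 * v ^ 2 * (T - t) / 2)
        ≤ 4 / (σ ^ 4 * v ^ 4 * (T - t) ^ 2) := by
      have hx : (0:ℝ) < σ ^ 2 * v ^ 2 * (T - t) / 2 := by positivity
      have hsq := sq_le_exp' _ hx.le
      have hxx : -σ ^ 2 * v ^ 2 * (T - t) / 2 = -(σ ^ 2 * v ^ 2 * (T - t) / 2) := by ring
      rw [hxx, Real.exp_neg]
      calc (Real.exp (σ ^ 2 * v ^ 2 * (T - t) / 2))⁻¹
          ≤ ((σ ^ 2 * v ^ 2 * (T - t) / 2) ^ 2)⁻¹ := by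
            apply inv_anti₀ (by positivity) hsq
        _ = 4 / (σ ^ 4 * v ^ 4 * (T - t) ^ 2) := by
            field_simp; ring
    have hφv : ‖φ v‖ ≤ C₁ * (4 / (σ ^ 4 * v ^ 4 * (T - t) ^ 2)) :=
      (hφ v).trans (mul_le_mul_of_nonneg_left hexp hC₁.le)
    calc ‖(K : ℂ) ^ (-(v : ℂ) * Complex.I - ↑α + 1)
          / (↑α - 1 + ↑v * Complex.I) * φ v * (S : ℂ) ^ ((α : ℂ) + ↑v * Complex.I)‖
        = K ^ (1 - α) / ‖((α : ℂ) - 1 + ↑v * Complex.I)‖ * ‖φ v‖ * S ^ α := by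
          rw [norm_mul, norm_mul, norm_div, h1, h3]
      _ ≤ K ^ (1 - α) / v * (C₁ * (4 / (σ ^ 4 * v ^ 4 * (T - t) ^ 2))) * S ^ α := by
          gcongr
      _ = M * v ^ (-5 : ℝ) := by
          rw [show (-5 : ℝ) = -((5:ℕ):ℝ) by norm_num, Real.rpow_neg hv0.le,
            Real.rpow_natCast, hMdef]
          field_simp
  have hint : IntegrableOn (fun v : ℝ => M * v ^ (-5 : ℝ)) (Set.Ioi a) :=
    (integrableOn_Ioi_rpow_of_lt (by norm_num) ha).const_mul M
  have key : ‖∫ v in Set.Ioi a,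
        (K : ℂ) ^ (-(v : ℂ) * Complex.I - ↑α + 1)
          / (↑α - 1 + ↑v * Complex.I) * φ v * (S : ℂ) ^ ((α : ℂ) + ↑v * Complex.I)‖
      ≤ ∫ v in Set.Ioi a, M * v ^ (-5 : ℝ) :=
    norm_integral_le_of_norm_le hint
      ((ae_restrict_iff' measurableSet_Ioi).mpr (ae_of_all _ hbound))
  have hval : (∫ v in Set.Ioi a, M * v ^ (-5 : ℝ)) = M * (a ^ (-4 : ℝ) / 4) := by
    rw [integral_const_mul, integral_Ioi_rpow_of_lt (by norm_num) ha]
    norm_num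
  -- final arithmetic
  have ha4 : a ^ (-4 : ℝ) = (a ^ (4:ℕ))⁻¹ := by
    rw [show (-4 : ℝ) = -((4:ℕ):ℝ) by norm_num, Real.rpow_neg ha.le, Real.rpow_natCast]
  set B : ℝ := K / Real.pi * (K / S) ^ (-α) * C₁ with hBdef
  have hB : 0 < B := by
    have : (0:ℝ) < (K / S) ^ (-α) := Real.rpow_pos_of_pos (by positivity) _
    positivity
  have hBval : B = C₁ * K ^ (1 - α) * S ^ α / Real.pi := by
    rw [hBdef, Real.rpow_neg (by positivity), Real.div_rpow hK.le hS.le,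
      Real.rpow_sub hK, Real.rpow_one]
    field_simp
  have hD : (0:ℝ) < σ * Real.sqrt (T - t) * ε ^ ((1:ℝ)/4) := by
    have := Real.sqrt_pos.mpr hTt
    have := Real.rpow_pos_of_pos hε ((1:ℝ)/4)
    positivity
  have hL : (0:ℝ) ≤ B ^ ((1:ℝ)/4) * (1 / (σ * Real.sqrt (T - t) * ε ^ ((1:ℝ)/4))) := by
    have := Real.rpow_pos_of_pos hB ((1:ℝ)/4)
    positivity
  have hpow : (B ^ ((1:ℝ)/4) * (1 / (σ * Real.sqrt (T - t) * ε ^ ((1:ℝ)/4)))) ^ (4:ℕ)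
      ≤ a ^ (4:ℕ) := pow_le_pow_left₀ hL hcond 4
  have hB4 : (B ^ ((1:ℝ)/4)) ^ (4:ℕ) = B := by
    rw [← Real.rpow_natCast (B ^ ((1:ℝ)/4)) 4, ← Real.rpow_mul hB.le]
    norm_num
  have hε4 : (ε ^ ((1:ℝ)/4)) ^ (4:ℕ) = ε := by
    rw [← Real.rpow_natCast (ε ^ ((1:ℝ)/4)) 4, ← Real.rpow_mul hε.le]
    norm_num
  have hsq4 : (Real.sqrt (T - t)) ^ (4:ℕ) = (T - t) ^ 2 := by
    have : (Real.sqrt (T - t)) ^ (4:ℕ) = ((Real.sqrt (T - t)) ^ 2) ^ 2 := by ring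
    rw [this, Real.sq_sqrt hTt.le]
  have hkey2 : B / (σ ^ 4 * (T - t) ^ 2 * ε) ≤ a ^ (4:ℕ) := by
    calc B / (σ ^ 4 * (T - t) ^ 2 * ε)
        = (B ^ ((1:ℝ)/4) * (1 / (σ * Real.sqrt (T - t) * ε ^ ((1:ℝ)/4)))) ^ (4:ℕ) := by
          rw [mul_pow, hB4, div_pow, one_pow, mul_pow, mul_pow, hε4, hsq4]
          ring
      _ ≤ a ^ (4:ℕ) := hpow
  have hfinal : 1 / Real.pi * (M * (a ^ (-4 : ℝ) / 4)) ≤ ε := by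
    rw [hBval] at hkey2
    rw [div_le_iff₀ (by positivity : (0:ℝ) < σ ^ 4 * (T - t) ^ 2 * ε),
      div_le_iff₀ hπ] at hkey2
    have hgoal : 1 / Real.pi * (M * (a ^ (-4 : ℝ) / 4))
        = C₁ * K ^ (1 - α) * S ^ α / (Real.pi * (a ^ (4:ℕ) * (σ ^ 4 * (T - t) ^ 2))) := by
      rw [ha4, hMdef]
      field_simp
    rw [hgoal, div_le_iff₀ (by positivity)]
    nlinarith [hkey2, hπ.le]
  calc ‖(1 / (Real.pi : ℂ)) * ∫ v in Set.Ioi a,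
        (K : ℂ) ^ (-(v : ℂ) * Complex.I - ↑α + 1)
          / (↑α - 1 + ↑v * Complex.I) * φ v * (S : ℂ) ^ ((α : ℂ) + ↑v * Complex.I)‖
      = 1 / Real.pi * ‖∫ v in Set.Ioi a,
        (K : ℂ) ^ (-(v : ℂ) * Complex.I - ↑α + 1)
          / (↑α - 1 + ↑v * Complex.I) * φ v * (S : ℂ) ^ ((α : ℂ) + ↑v * Complex.I)‖ := by
        rw [norm_mul]
        congr 1
        simp [abs_of_pos hπ]
    _ ≤ 1 / Real.pi * (M * (a ^ (-4 : ℝ) / 4)) := by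
        rw [← hval]
        exact mul_le_mul_of_nonneg_left key (by positivity)
    _ ≤ ε := hfinal
end
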